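/- arXiv:2006.04095 — 8 statements merged into one kernel-verified Lean document; each statement's English description precedes it below -/
import Mathlib

section
/- Let n ≥ 1 and 0 ≤ l ≤ n. For g in the real orthogonal group O(n), let Λ^l(g) denote the ℂ-linear endomorphism of the l-th exterior power ⋀^l(ℂ^n) induced, by functoriality of the exterior power, by the ℂ-linear map ℂ^n → ℂ^n of multiplication by the matrix g (real entries regarded as complex numbers). Then every ℂ-linear subspace W of ⋀^l(ℂ^n) satisfying Λ^l(g)(W) ⊆ W for all g ∈ O(n) equals {0} or all of ⋀^l(ℂ^n); that is, ⋀^l(ℂ^n) is an irreducible O(n)-module. -/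
/-!
The diagonal sign matrices `diag(ε₁, …, εₙ)` lie in `O(n)` and act on the standard basis vector
`e_S` (`S` an `l`-subset of `Fin n`) of `⋀^l ℂⁿ` by the character `ε ↦ ∏_{j ∈ S} εⱼ` of `(ℤˣ)ⁿ`.
These characters are pairwise distinct, hence orthogonal, so averaging against them projects an
invariant subspace `W` onto the lines `ℂ e_S`; if `W ≠ 0`, one projection is nonzero and
`e_S ∈ W` for some `S`. The permutation matrices also lie in `O(n)`, and they move `e_S` to
`±e_T` for every `l`-subset `T`, so `W` contains the whole basis.
-/

open ExteriorAlgebra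

section SignCharacter

variable {σ : Type*} [Fintype σ] [DecidableEq σ]

def signChar (S : Finset σ) (ε : σ → ℤˣ) : ℤ := ∏ j ∈ S, (ε j : ℤ)

theorem sum_signChar_mul_signChar (S T : Finset σ) :
    ∑ ε : σ → ℤˣ, signChar S ε * signChar T ε = if S = T then 2 ^ Fintype.card σ else 0 := by
  have hχ : ∀ (U : Finset σ) ε, signChar U ε = ∏ j, if j ∈ U then (ε j : ℤ) else 1 :=
    fun U ε => (Fintype.prod_ite_mem U _).symm
  have hfactor : ∀ j, ∑ u : ℤˣ, (if j ∈ S then (u : ℤ) else 1) * (if j ∈ T then (u : ℤ) else 1)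
      = if (j ∈ S ↔ j ∈ T) then 2 else 0 := by
    intro j
    rw [UnitsInt.univ, Finset.sum_pair (by decide)]
    by_cases hS : j ∈ S <;> by_cases hT : j ∈ T <;> simp [hS, hT]
  simp only [hχ, ← Finset.prod_mul_distrib]
  rw [← Fintype.prod_sum fun j (u : ℤˣ) =>
    (if j ∈ S then (u : ℤ) else 1) * (if j ∈ T then (u : ℤ) else 1)]
  rw [Finset.prod_congr rfl fun j _ => hfactor j]
  split_ifs with hST
  · simp [hST]
  · obtain ⟨j, hj⟩ : ∃ j, ¬(j ∈ S ↔ j ∈ T) := by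
      by_contra! h
      exact hST (Finset.ext h)
    exact Finset.prod_eq_zero (Finset.mem_univ j) (if_neg hj)

theorem Submodule.exists_basis_mem_of_signChar_eigenbasis {K V ι : Type*} [Field K]
    [AddCommGroup V] [Module K V] [Fintype ι] (h2 : (2 : K) ≠ 0) (B : Module.Basis ι K V)
    {wt : ι → Finset σ} (hwt : Function.Injective wt) {ρ : (σ → ℤˣ) → Module.End K V}
    (hρ : ∀ ε i, ρ ε (B i) = (signChar (wt i) ε : K) • B i) {W : Submodule K V}
    (hW : ∀ ε, ∀ w ∈ W, ρ ε w ∈ W) (hW0 : W ≠ ⊥) : ∃ i, B i ∈ W := by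
  obtain ⟨x, hxW, hx0⟩ := W.ne_bot_iff.1 hW0
  obtain ⟨i, hi⟩ : ∃ i, B.repr x i ≠ 0 := by
    by_contra! h
    exact hx0 (B.repr.map_eq_zero_iff.1 (Finsupp.ext h))
  -- averaging against the character of weight `wt i` projects onto the line through `B i`
  let P : Module.End K V := ∑ ε, (signChar (wt i) ε : K) • ρ ε
  have hPB : ∀ k, P (B k) = ((if wt i = wt k then 2 ^ Fintype.card σ else 0 : ℤ) : K) • B k := by
    intro k
    simp only [P, LinearMap.sum_apply, LinearMap.smul_apply, hρ, smul_smul, ← Finset.sum_smul]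
    rw [← sum_signChar_mul_signChar]
    push_cast
    rfl
  have hPx : P x = (2 ^ Fintype.card σ * B.repr x i) • B i := by
    conv_lhs => rw [← B.sum_repr x]
    rw [map_sum, Finset.sum_eq_single i]
    · simp [hPB, smul_smul, mul_comm]
    · intro k _ hk
      simp [hPB, hwt.ne (Ne.symm hk)]
    · simp
  have hPW : P x ∈ W := by
    simp only [P, LinearMap.sum_apply, LinearMap.smul_apply]
    exact W.sum_mem fun ε _ => W.smul_mem _ (hW ε x hxW)
  rw [hPx] at hPW
  exact ⟨i, (W.smul_mem_iff (mul_ne_zero (pow_ne_zero _ h2) hi)).1 hPW⟩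

end SignCharacter

namespace exteriorPower

variable {R M N : Type*} [CommRing R] [AddCommGroup M] [Module R M] [AddCommGroup N] [Module R N]

theorem coe_map_apply (l : ℕ) (f : M →ₗ[R] N) (x : ⋀[R]^l M) :
    (map l f x : ExteriorAlgebra R N) = ExteriorAlgebra.map f x := by
  have : (⋀[R]^l N).subtype ∘ₗ map l f =
      (ExteriorAlgebra.map f).toLinearMap ∘ₗ (⋀[R]^l M).subtype := by
    refine LinearMap.ext_on (ιMulti_span R l M) ?_
    rintro _ ⟨m, rfl⟩
    simp [Function.comp_def]
  exact LinearMap.congr_fun this x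

variable {I : Type*} [LinearOrder I] (b : Module.Basis I R M) (l : ℕ)

open Set.powersetCard

theorem map_basis_exteriorPower_of_apply_eq_smul {f : M →ₗ[R] M} {c : I → R}
    (hf : ∀ i, f (b i) = c i • b i) (s : Set.powersetCard I l) :
    map l f (b.exteriorPower l s) = (∏ i ∈ s.val, c i) • b.exteriorPower l s := by
  rw [basis_apply, map_apply_ιMulti_family, ιMulti_family, ιMulti_family]
  simp only [Function.comp_def, hf, AlternatingMap.map_smul_univ]
  rw [← Finset.map_orderEmbOfFin_univ s.val s.prop, Finset.prod_map]
  rfl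

theorem map_basis_exteriorPower_of_apply_eq_basis_perm {f : M →ₗ[R] M} {π : Equiv.Perm I}
    (hf : ∀ i, f (b i) = b (π i)) (s : Set.powersetCard I l) :
    ∃ u : ℤˣ, map l f (b.exteriorPower l s) = u • b.exteriorPower l (π • s) := by
  set α := ofFinEmbEquiv.symm s
  set β := ofFinEmbEquiv.symm (π • s)
  have hrange : Set.range (π ∘ α) = Set.range β := by
    ext i
    rw [mem_range_ofFinEmbEquiv_symm_iff_mem, Set.range_comp, Set.mem_image]
    simp only [mem_range_ofFinEmbEquiv_symm_iff_mem, α]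
    rw [← mem_coe_iff, coe_smul, Finset.mem_smul_finset]
    rfl
  -- `π ∘ α` and `β` enumerate the same `l`-subset, so they differ by a permutation of `Fin l`
  let τ : Equiv.Perm (Fin l) := ((Equiv.ofInjective _ (π.injective.comp α.injective)).trans
    (Equiv.setCongr hrange)).trans (Equiv.ofInjective β β.injective).symm
  have hτ : π ∘ α = β ∘ τ := by
    funext k
    simp [τ, Equiv.apply_ofInjective_symm]
  refine ⟨Equiv.Perm.sign τ, ?_⟩
  rw [basis_apply, basis_apply, map_apply_ιMulti_family, ιMulti_family, ιMulti_family]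
  have : (f ∘ b) ∘ α = (b ∘ β) ∘ τ := by
    rw [Function.comp_assoc b, ← hτ]
    funext k
    simp [hf]
  rw [this, AlternatingMap.map_perm]

end exteriorPower

namespace Matrix

variable {σ : Type*} [Fintype σ] [DecidableEq σ]

theorem transpose_diagonal_units_mul_self {R : Type*} [CommRing R] (ε : σ → ℤˣ) :
    (diagonal fun j => ((ε j : ℤ) : R))ᵀ * diagonal (fun j => ((ε j : ℤ) : R)) = 1 := by
  rw [diagonal_transpose, diagonal_mul_diagonal, ← diagonal_one]
  congr 1
  funext j
  rw [← Int.cast_mul, ← Units.val_mul, Int.units_mul_self, Units.val_one, Int.cast_one]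

theorem transpose_permMatrix_mul_self {R : Type*} [CommRing R] (π : Equiv.Perm σ) :
    (π.permMatrix R)ᵀ * π.permMatrix R = 1 := by
  rw [transpose_permMatrix, ← permMatrix_mul, mul_inv_cancel, permMatrix_one]

variable {R S : Type*} [CommRing R] [CommRing S] (f : R →+* S)

theorem mulVecLin_map_diagonal_basisFun (d : σ → R) (j : σ) :
    ((diagonal d).map f).mulVecLin (Pi.basisFun S σ j) = f (d j) • Pi.basisFun S σ j := by
  rw [diagonal_map f.map_zero, mulVecLin_apply, Pi.basisFun_apply, diagonal_mulVec_single,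
    ← Pi.single_smul', smul_eq_mul, mul_one]

theorem mulVecLin_map_permMatrix_inv_basisFun (π : Equiv.Perm σ) (j : σ) :
    ((π⁻¹.permMatrix R).map f).mulVecLin (Pi.basisFun S σ j) = Pi.basisFun S σ (π j) := by
  rw [PEquiv.map_toMatrix, mulVecLin_apply, permMatrix_mulVec]
  ext k
  simp [Pi.single_apply, Equiv.symm_apply_eq]

end Matrix

theorem exteriorPower_orthogonal_irreducible_general
    (n l : ℕ)
    (Λ : Matrix (Fin n) (Fin n) ℝ →
      ((⋀[ℂ]^l (Fin n → ℂ)) →ₗ[ℂ] (⋀[ℂ]^l (Fin n → ℂ))))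
    (hΛ : ∀ g : Matrix (Fin n) (Fin n) ℝ, g.transpose * g = 1 →
      ∀ x : ⋀[ℂ]^l (Fin n → ℂ),
        ((Λ g x : ExteriorAlgebra ℂ (Fin n → ℂ))) =
          ExteriorAlgebra.map ((g.map (Complex.ofReal)).mulVecLin)
            (x : ExteriorAlgebra ℂ (Fin n → ℂ)))
    (W : Submodule ℂ (⋀[ℂ]^l (Fin n → ℂ)))
    (hW : ∀ g : Matrix (Fin n) (Fin n) ℝ, g.transpose * g = 1 →
      ∀ w ∈ W, Λ g w ∈ W) :
    W = ⊥ ∨ W = ⊤ := by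
  have hΛ_eq : ∀ g : Matrix (Fin n) (Fin n) ℝ, g.transpose * g = 1 →
      Λ g = exteriorPower.map l (g.map Complex.ofReal).mulVecLin := fun g hg =>
    LinearMap.ext fun x => Subtype.ext ((hΛ g hg x).trans (exteriorPower.coe_map_apply l _ x).symm)
  set B := (Pi.basisFun ℂ (Fin n)).exteriorPower l
  have hdiag : ∀ (ε : Fin n → ℤˣ) s,
      Λ (Matrix.diagonal fun j => ((ε j : ℤ) : ℝ)) (B s) = (signChar s.val ε : ℂ) • B s := by
    intro ε s
    rw [hΛ_eq _ (Matrix.transpose_diagonal_units_mul_self ε)]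
    refine (exteriorPower.map_basis_exteriorPower_of_apply_eq_smul _ l
      (Matrix.mulVecLin_map_diagonal_basisFun Complex.ofRealHom _) s).trans ?_
    push_cast [signChar]
    rfl
  have hperm : ∀ (π : Equiv.Perm (Fin n)) s,
      ∃ u : ℤˣ, Λ (π⁻¹.permMatrix ℝ) (B s) = u • B (π • s) := by
    intro π s
    rw [hΛ_eq _ (Matrix.transpose_permMatrix_mul_self π⁻¹)]
    exact exteriorPower.map_basis_exteriorPower_of_apply_eq_basis_perm _ l
      (Matrix.mulVecLin_map_permMatrix_inv_basisFun Complex.ofRealHom π) s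
  refine or_iff_not_imp_left.2 fun hW0 => ?_
  obtain ⟨s, hs⟩ := W.exists_basis_mem_of_signChar_eigenbasis two_ne_zero B Subtype.val_injective
    hdiag (fun ε => hW _ (Matrix.transpose_diagonal_units_mul_self ε)) hW0
  rw [eq_top_iff, ← B.span_eq, Submodule.span_le]
  rintro _ ⟨t, rfl⟩
  obtain ⟨π, rfl⟩ := Set.powersetCard.isPretransitive.exists_smul_eq s t
  obtain ⟨u, hu⟩ := hperm π s
  have hπs := hW _ (Matrix.transpose_permMatrix_mul_self π⁻¹) _ hs
  rwa [hu, Submodule.smul_mem_iff'] at hπs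

/-- Irreducibility of `⋀^l(ℂ^n)` as an `O(n)`-module: any subspace invariant under all the
induced maps `Λ^l(g)`, for `g` in the real orthogonal group, is `{0}` or everything. -/
theorem exteriorPower_orthogonal_irreducible
    (n l : ℕ) (hn : 1 ≤ n) (hl : l ≤ n)
    (Λ : Matrix (Fin n) (Fin n) ℝ →
      ((⋀[ℂ]^l (Fin n → ℂ)) →ₗ[ℂ] (⋀[ℂ]^l (Fin n → ℂ))))
    (hΛ : ∀ g : Matrix (Fin n) (Fin n) ℝ, g.transpose * g = 1 →
      ∀ x : ⋀[ℂ]^l (Fin n → ℂ),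
        ((Λ g x : ExteriorAlgebra ℂ (Fin n → ℂ))) =
          ExteriorAlgebra.map ((g.map (Complex.ofReal)).mulVecLin)
            (x : ExteriorAlgebra ℂ (Fin n → ℂ)))
    (W : Submodule ℂ (⋀[ℂ]^l (Fin n → ℂ)))
    (hW : ∀ g : Matrix (Fin n) (Fin n) ℝ, g.transpose * g = 1 →
      ∀ w ∈ W, Λ g w ∈ W) :
    W = ⊥ ∨ W = ⊤ :=
  exteriorPower_orthogonal_irreducible_general n l Λ hΛ W hW
end

section
/- Let n ≥ 1 and let 0 ≤ l, l' ≤ n with l ≠ l'. For g in the real orthogonal group O(n), let Λ^l(g) denote the ℂ-linear endomorphism of ⋀^l(ℂ^n) induced, by functoriality of the exterior power, by multiplication by g on ℂ^n. Then every ℂ-linear map T : ⋀^l(ℂ^n) → ⋀^{l'}(ℂ^n) satisfying T ∘ Λ^l(g) = Λ^{l'}(g) ∘ T for all g ∈ O(n) is the zero map; that is, ⋀^l(ℂ^n) and ⋀^{l'}(ℂ^n) are non-isomorphic O(n)-modules. -/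
/-!
The coordinate reflections `sⱼ = diag(1, …, -1, …, 1)` lie in `O(n)`, and `sⱼ` acts on a wedge
`e_{i₁} ∧ ⋯ ∧ e_{iₘ}` of distinct basis vectors by `-1` or `1` according as `j` is or is not
among the `iₖ`. Hence `∑ⱼ Λᵐ(sⱼ)` acts on `⋀ᵐ(ℂⁿ)` as the scalar `n - 2m`, and an intertwiner
`T` satisfies `(n - 2l) T = (n - 2l') T`, which forces `T = 0` when `l ≠ l'`.
-/

open ExteriorAlgebra

namespace Matrix

variable {ι : Type*} [DecidableEq ι]

def coordReflection (R : Type*) [Ring R] (j : ι) : Matrix ι ι R :=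
  diagonal (Function.update 1 j (-1))

lemma coordReflection_map {R S : Type*} [Ring R] [Ring S] (φ : R →+* S) (j : ι) :
    (coordReflection R j).map φ = coordReflection S j := by
  rw [coordReflection, diagonal_map (map_zero φ), coordReflection]
  congr 1
  ext k
  rcases eq_or_ne k j with rfl | hk <;> simp [*]

lemma transpose_mul_coordReflection [Fintype ι] (R : Type*) [Ring R] (j : ι) :
    (coordReflection R j)ᵀ * coordReflection R j = 1 := by
  rw [coordReflection, diagonal_transpose, diagonal_mul_diagonal, ← diagonal_one]
  congr 1
  ext k
  rcases eq_or_ne k j with rfl | hk <;> simp [*]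

end Matrix

section

variable {R ι : Type*} [CommRing R] [Fintype ι] [DecidableEq ι]

lemma ExteriorAlgebra.map_diagonal_ιMulti_basisFun {m : ℕ} (d : ι → R) (f : Fin m → ι) :
    map (Matrix.diagonal d).mulVecLin (ιMulti R m fun i => Pi.basisFun R ι (f i)) =
      (∏ i, d (f i)) • ιMulti R m fun i => Pi.basisFun R ι (f i) := by
  rw [map_apply_ιMulti, ← AlternatingMap.map_smul_univ]
  congr 1
  ext i k
  simp [Pi.single_apply]

lemma sum_prod_update_neg_one_of_injective {m : ℕ} {f : Fin m → ι} (hf : Function.Injective f) :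
    ∑ j, ∏ i, Function.update (1 : ι → R) j (-1) (f i) = Fintype.card ι - 2 * m := by
  have hprod : ∀ j, ∏ i, Function.update (1 : ι → R) j (-1) (f i) =
      1 - 2 * if j ∈ Finset.univ.image f then 1 else 0 := by
    intro j
    split_ifs with hj
    · obtain ⟨i₀, -, rfl⟩ := Finset.mem_image.1 hj
      rw [Fintype.prod_eq_single i₀ fun i hi => by simp [hf.ne hi]]
      norm_num
    · rw [mul_zero, sub_zero]
      refine Finset.prod_eq_one fun i _ => Function.update_of_ne ?_ _ _
      rintro rfl
      exact hj (Finset.mem_image_of_mem f (Finset.mem_univ i))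
  simp only [hprod, Finset.sum_sub_distrib, ← Finset.mul_sum, Finset.sum_boole]
  simp [Finset.card_image_of_injective _ hf]

lemma ExteriorAlgebra.sum_map_coordReflection_of_mem_exteriorPower {m : ℕ}
    {x : ExteriorAlgebra R (ι → R)} (hx : x ∈ ⋀[R]^m (ι → R)) :
    ∑ j, map (Matrix.coordReflection R j).mulVecLin x = ((Fintype.card ι : R) - 2 * m) • x := by
  suffices h : (∑ j, (map (Matrix.coordReflection R j).mulVecLin).toLinearMap) ∘ₗ
      (⋀[R]^m (ι → R)).subtype = ((Fintype.card ι : R) - 2 * m) • (⋀[R]^m (ι → R)).subtype by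
    simpa using LinearMap.congr_fun h ⟨x, hx⟩
  refine exteriorPower.linearMap_ext <| (Pi.basisFun R ι).ext_alternating fun f hf => ?_
  simp only [LinearMap.compAlternatingMap_apply, LinearMap.comp_apply, Submodule.coe_subtype,
    exteriorPower.ιMulti_apply_coe, LinearMap.smul_apply, LinearMap.sum_apply,
    AlgHom.toLinearMap_apply, Matrix.coordReflection, map_diagonal_ιMulti_basisFun]
  rw [← Finset.sum_smul, sum_prod_update_neg_one_of_injective hf]

end

lemma sum_coordReflection_smul_of_orthogonal {n m : ℕ}
    (Λ : Matrix (Fin n) (Fin n) ℝ → ⋀[ℂ]^m (Fin n → ℂ) →ₗ[ℂ] ⋀[ℂ]^m (Fin n → ℂ))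
    (hΛ : ∀ g : Matrix (Fin n) (Fin n) ℝ, g.transpose * g = 1 →
      ∀ x : ⋀[ℂ]^m (Fin n → ℂ),
        (Λ g x : ExteriorAlgebra ℂ (Fin n → ℂ)) = map (g.map Complex.ofReal).mulVecLin x)
    (x : ⋀[ℂ]^m (Fin n → ℂ)) :
    ∑ j, Λ (Matrix.coordReflection ℝ j) x = ((n : ℂ) - 2 * m) • x := by
  -- stated with `Complex.ofReal` rather than `⇑Complex.ofRealHom`, so that `simp` can use it on `hΛ`
  have hmap : ∀ j : Fin n, (Matrix.coordReflection ℝ j).map Complex.ofReal =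
      Matrix.coordReflection ℂ j :=
    Matrix.coordReflection_map Complex.ofRealHom
  refine Subtype.ext ?_
  simpa [hΛ _ (Matrix.transpose_mul_coordReflection ℝ _), hmap] using
    sum_map_coordReflection_of_mem_exteriorPower x.2

theorem exteriorPower_orthogonal_nonisomorphic_general
    (n l l' : ℕ) (hll' : l ≠ l')
    (Λ : Matrix (Fin n) (Fin n) ℝ →
      ((⋀[ℂ]^l (Fin n → ℂ)) →ₗ[ℂ] (⋀[ℂ]^l (Fin n → ℂ))))
    (hΛ : ∀ g : Matrix (Fin n) (Fin n) ℝ, g.transpose * g = 1 →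
      ∀ x : ⋀[ℂ]^l (Fin n → ℂ),
        ((Λ g x : ExteriorAlgebra ℂ (Fin n → ℂ))) =
          ExteriorAlgebra.map ((g.map (Complex.ofReal)).mulVecLin)
            (x : ExteriorAlgebra ℂ (Fin n → ℂ)))
    (Λ' : Matrix (Fin n) (Fin n) ℝ →
      ((⋀[ℂ]^l' (Fin n → ℂ)) →ₗ[ℂ] (⋀[ℂ]^l' (Fin n → ℂ))))
    (hΛ' : ∀ g : Matrix (Fin n) (Fin n) ℝ, g.transpose * g = 1 →
      ∀ x : ⋀[ℂ]^l' (Fin n → ℂ),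
        ((Λ' g x : ExteriorAlgebra ℂ (Fin n → ℂ))) =
          ExteriorAlgebra.map ((g.map (Complex.ofReal)).mulVecLin)
            (x : ExteriorAlgebra ℂ (Fin n → ℂ)))
    (T : (⋀[ℂ]^l (Fin n → ℂ)) →ₗ[ℂ] (⋀[ℂ]^l' (Fin n → ℂ)))
    (hT : ∀ g : Matrix (Fin n) (Fin n) ℝ, g.transpose * g = 1 →
      T ∘ₗ Λ g = Λ' g ∘ₗ T) :
    T = 0 := by
  refine LinearMap.ext fun x => ?_
  have heigen : ((n : ℂ) - 2 * l) • T x = ((n : ℂ) - 2 * l') • T x := by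
    rw [← map_smul, ← sum_coordReflection_smul_of_orthogonal Λ hΛ, map_sum,
      ← sum_coordReflection_smul_of_orthogonal Λ' hΛ']
    exact Finset.sum_congr rfl fun j _ =>
      LinearMap.congr_fun (hT _ (Matrix.transpose_mul_coordReflection ℝ j)) x
  by_contra hTx
  have hcoeff := smul_left_injective ℂ hTx heigen
  rw [sub_right_inj, mul_right_inj' two_ne_zero, Nat.cast_inj] at hcoeff
  exact hll' hcoeff

/-- For `l ≠ l'`, the exterior powers `⋀^l(ℂ^n)` and `⋀^{l'}(ℂ^n)` are non-isomorphic
`O(n)`-modules: any linear map intertwining the induced actions of the real orthogonal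
group is zero. -/
theorem exteriorPower_orthogonal_nonisomorphic
    (n l l' : ℕ) (hn : 1 ≤ n) (hl : l ≤ n) (hl' : l' ≤ n) (hll' : l ≠ l')
    (Λ : Matrix (Fin n) (Fin n) ℝ →
      ((⋀[ℂ]^l (Fin n → ℂ)) →ₗ[ℂ] (⋀[ℂ]^l (Fin n → ℂ))))
    (hΛ : ∀ g : Matrix (Fin n) (Fin n) ℝ, g.transpose * g = 1 →
      ∀ x : ⋀[ℂ]^l (Fin n → ℂ),
        ((Λ g x : ExteriorAlgebra ℂ (Fin n → ℂ))) =
          ExteriorAlgebra.map ((g.map (Complex.ofReal)).mulVecLin)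
            (x : ExteriorAlgebra ℂ (Fin n → ℂ)))
    (Λ' : Matrix (Fin n) (Fin n) ℝ →
      ((⋀[ℂ]^l' (Fin n → ℂ)) →ₗ[ℂ] (⋀[ℂ]^l' (Fin n → ℂ))))
    (hΛ' : ∀ g : Matrix (Fin n) (Fin n) ℝ, g.transpose * g = 1 →
      ∀ x : ⋀[ℂ]^l' (Fin n → ℂ),
        ((Λ' g x : ExteriorAlgebra ℂ (Fin n → ℂ))) =
          ExteriorAlgebra.map ((g.map (Complex.ofReal)).mulVecLin)
            (x : ExteriorAlgebra ℂ (Fin n → ℂ)))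
    (T : (⋀[ℂ]^l (Fin n → ℂ)) →ₗ[ℂ] (⋀[ℂ]^l' (Fin n → ℂ)))
    (hT : ∀ g : Matrix (Fin n) (Fin n) ℝ, g.transpose * g = 1 →
      T ∘ₗ Λ g = Λ' g ∘ₗ T) :
    T = 0 :=
  exteriorPower_orthogonal_nonisomorphic_general n l l' hll' Λ hΛ Λ' hΛ' T hT
end

section
/- For every t ∈ ℂ and every m ∈ ℕ_0: ∫_ℂ z^m · exp(−2π z·conj(z) + 2π i (z t + conj(z t))) d_ℂ z = (i · conj(t))^m · exp(−2π t·conj(t)). -/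
/-!
Writing `z = x + i y`, the Gaussian `∫ exp (-c z z̄ + a z + b z̄)` splits into two
one-dimensional Gaussians and equals `(π / c) exp (a b / c)`. Differentiating in `a` under the
integral sign multiplies the integrand by `z` and the closed form by `b / c`, so the `k`-th moment
is `(π / c) (b / c) ^ k exp (a b / c)`. The theorem is the case `c = 2π`, `a = 2π i t`,
`b = 2π i t̄`, doubled because `d_ℂ z` is twice Lebesgue measure.
-/

open Real MeasureTheory ComplexConjugate

theorem pow_mul_rexp_neg_mul_sq_add_le (k : ℕ) {κ : ℝ} (hκ : 0 < κ) (R : ℝ) {r : ℝ}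
    (hr : 0 ≤ r) :
    r ^ k * rexp (-κ * r ^ 2 + R * r) ≤
      rexp ((R + k) ^ 2 / (2 * κ)) * rexp (-(κ / 2) * r ^ 2) := by
  have h_pow : r ^ k ≤ rexp (k * r) := by
    rw [Real.exp_nat_mul]
    exact pow_le_pow_left₀ hr ((le_add_of_nonneg_right zero_le_one).trans (add_one_le_exp r)) k
  have h_sq : (R + k) * r - κ * r ^ 2 ≤ (R + k) ^ 2 / (2 * κ) - κ / 2 * r ^ 2 := by
    rw [le_sub_iff_add_le, le_div_iff₀ (by positivity)]
    nlinarith [sq_nonneg (R + k - κ * r)]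
  calc r ^ k * rexp (-κ * r ^ 2 + R * r)
      ≤ rexp (k * r) * rexp (-κ * r ^ 2 + R * r) := by gcongr
    _ ≤ rexp ((R + k) ^ 2 / (2 * κ)) * rexp (-(κ / 2) * r ^ 2) := by
      rw [← Real.exp_add, ← Real.exp_add, Real.exp_le_exp]
      linarith

theorem integrable_pow_norm_mul_rexp_neg_mul_sq_add {V : Type*} [NormedAddCommGroup V]
    [InnerProductSpace ℝ V] [FiniteDimensional ℝ V] [MeasurableSpace V] [BorelSpace V]
    (k : ℕ) {κ : ℝ} (hκ : 0 < κ) (R : ℝ) :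
    Integrable (fun v : V => ‖v‖ ^ k * rexp (-κ * ‖v‖ ^ 2 + R * ‖v‖)) := by
  have h_gauss : Integrable (fun v : V => rexp (-(κ / 2) * ‖v‖ ^ 2)) := by
    simpa [Complex.norm_exp, ← Complex.ofReal_pow] using
      (GaussianFourier.integrable_cexp_neg_mul_sq_norm_add (V := V) (b := (κ / 2 : ℝ))
        (by simpa using half_pos hκ) 0 0).norm
  refine (h_gauss.const_mul (rexp ((R + k) ^ 2 / (2 * κ)))).mono' (by fun_prop) ?_
  filter_upwards with v
  rw [Real.norm_of_nonneg (by positivity)]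
  exact pow_mul_rexp_neg_mul_sq_add_le k hκ R (norm_nonneg v)

namespace Complex

theorem norm_cexp_neg_mul_mul_conj_add_le (c a b z : ℂ) :
    ‖cexp (-(c * (z * conj z)) + (a * z + b * conj z))‖ ≤
      rexp (-c.re * ‖z‖ ^ 2 + (‖a‖ + ‖b‖) * ‖z‖) := by
  rw [norm_exp, Real.exp_le_exp, mul_conj, normSq_eq_norm_sq]
  have ha := re_le_norm (a * z)
  have hb := re_le_norm (b * conj z)
  simp only [norm_mul, norm_conj] at ha hb
  simp only [add_re, neg_re, re_mul_ofReal]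
  linarith

variable {c : ℂ}

theorem integral_cexp_neg_mul_mul_conj_add (hc : 0 < c.re) (a b : ℂ) :
    ∫ z : ℂ, cexp (-(c * (z * conj z)) + (a * z + b * conj z)) = π / c * cexp (a * b / c) := by
  have hc0 : c ≠ 0 := fun h => by simp [h] at hc
  have h_coord (p : Fin 2 → ℝ) :
      -(c * (measurableEquivPi.symm p * conj (measurableEquivPi.symm p))) +
          (a * measurableEquivPi.symm p + b * conj (measurableEquivPi.symm p)) =
        -c * ∑ i, (p i : ℂ) ^ 2 + ∑ i, ![a + b, (a - b) * I] i * p i := by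
    simp only [measurableEquivPi_symm_apply, Fin.sum_univ_two, map_add, map_mul, conj_ofReal,
      conj_I, Matrix.cons_val_zero, Matrix.cons_val_one]
    linear_combination c * p 1 ^ 2 * I_sq
  rw [← volume_preserving_equiv_pi.symm.integral_comp
    measurableEquivPi.symm.measurableEmbedding]
  simp only [h_coord]
  rw [GaussianFourier.integral_cexp_neg_mul_sum_add hc, Fintype.card_fin, Nat.cast_ofNat,
    div_self two_ne_zero, cpow_one, Fin.sum_univ_two]
  congr 2
  simp only [Matrix.cons_val_zero, Matrix.cons_val_one, Matrix.cons_val_fin_one]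
  field_simp
  linear_combination (a - b) ^ 2 * I_sq

theorem integrable_pow_mul_cexp_neg_mul_mul_conj_add (hc : 0 < c.re) (k : ℕ) (a b : ℂ) :
    Integrable (fun z : ℂ => z ^ k * cexp (-(c * (z * conj z)) + (a * z + b * conj z))) := by
  refine (integrable_pow_norm_mul_rexp_neg_mul_sq_add k hc (‖a‖ + ‖b‖)).mono'
    (by fun_prop) (.of_forall fun z => ?_)
  rw [norm_mul, norm_pow]
  gcongr
  exact norm_cexp_neg_mul_mul_conj_add_le c a b z

theorem hasDerivAt_integral_pow_mul_cexp_neg_mul_mul_conj_add (hc : 0 < c.re) (k : ℕ)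
    (a₀ b : ℂ) :
    HasDerivAt (fun a => ∫ z : ℂ, z ^ k * cexp (-(c * (z * conj z)) + (a * z + b * conj z)))
      (∫ z : ℂ, z ^ (k + 1) * cexp (-(c * (z * conj z)) + (a₀ * z + b * conj z))) a₀ := by
  have h_bound (z : ℂ) (a : ℂ) (ha : a ∈ Metric.ball a₀ 1) :
      ‖z ^ (k + 1) * cexp (-(c * (z * conj z)) + (a * z + b * conj z))‖ ≤
        ‖z‖ ^ (k + 1) * rexp (-c.re * ‖z‖ ^ 2 + (‖a₀‖ + 1 + ‖b‖) * ‖z‖) := by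
    have ha' : ‖a‖ ≤ ‖a₀‖ + 1 := by
      have := norm_le_norm_add_norm_sub' a a₀
      rw [Metric.mem_ball, dist_eq_norm] at ha
      linarith
    rw [norm_mul, norm_pow]
    gcongr
    refine (norm_cexp_neg_mul_mul_conj_add_le c a b z).trans ?_
    gcongr
  have h_deriv (z : ℂ) (a : ℂ) :
      HasDerivAt (fun a => z ^ k * cexp (-(c * (z * conj z)) + (a * z + b * conj z)))
        (z ^ (k + 1) * cexp (-(c * (z * conj z)) + (a * z + b * conj z))) a :=
    ((((hasDerivAt_id' a).mul_const z).add_const (b * conj z)).const_add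
      (-(c * (z * conj z)))).cexp.const_mul (z ^ k) |>.congr_deriv (by ring)
  have h_int (j : ℕ) (a : ℂ) := integrable_pow_mul_cexp_neg_mul_mul_conj_add hc j a b
  exact (hasDerivAt_integral_of_dominated_loc_of_deriv_le (Metric.ball_mem_nhds a₀ one_pos)
    (.of_forall fun a => (h_int k a).aestronglyMeasurable) (h_int k a₀)
    (h_int (k + 1) a₀).aestronglyMeasurable
    (.of_forall h_bound) (integrable_pow_norm_mul_rexp_neg_mul_sq_add (k + 1) hc _)
    (.of_forall fun z a _ => h_deriv z a)).2

theorem integral_pow_mul_cexp_neg_mul_mul_conj_add (hc : 0 < c.re) (k : ℕ) (a b : ℂ) :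
    ∫ z : ℂ, z ^ k * cexp (-(c * (z * conj z)) + (a * z + b * conj z)) =
      π / c * (b / c) ^ k * cexp (a * b / c) := by
  induction k generalizing a with
  | zero => simpa using integral_cexp_neg_mul_mul_conj_add hc a b
  | succ k ih =>
    have h_closed : HasDerivAt (fun a => π / c * (b / c) ^ k * cexp (a * b / c))
        (π / c * (b / c) ^ (k + 1) * cexp (a * b / c)) a :=
      (((hasDerivAt_id' a).mul_const b).div_const c).cexp.const_mul
        (π / c * (b / c) ^ k) |>.congr_deriv (by ring)
    have h_moment := hasDerivAt_integral_pow_mul_cexp_neg_mul_mul_conj_add hc k a b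
    simp only [ih] at h_moment
    exact h_moment.unique h_closed

end Complex

/-- For `t ∈ ℂ` and `m ∈ ℕ₀`:
`∫_ℂ z^m exp(−2π z conj z + 2π i (z t + conj(z t))) d_ℂ z = (i conj t)^m exp(−2π t conj t)`,
where `d_ℂ z` is twice the Lebesgue measure on `ℂ`. -/
theorem gaussian_fourier_complex (t : ℂ) (m : ℕ) :
    (∫ z : ℂ,
        z ^ m * Complex.exp (-(2 * π * (z * conj z)) +
          2 * π * Complex.I * (z * t + conj (z * t)))
      ∂((2 : ENNReal) • (volume : Measure ℂ))) =
      (Complex.I * conj t) ^ m * Complex.exp (-(2 * π * (t * conj t))) := by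
  have h_two_pi : 0 < (2 * π : ℂ).re := by simp [pi_pos]
  have h_exponent (z : ℂ) : 2 * π * Complex.I * (z * t + conj (z * t)) =
      2 * π * Complex.I * t * z + 2 * π * Complex.I * conj t * conj z := by
    rw [map_mul]; ring
  have hπ : (π : ℂ) ≠ 0 := Complex.ofReal_ne_zero.2 pi_ne_zero
  have h_mass : (π : ℂ) / (2 * π) = 1 / 2 := by field_simp
  have h_ratio : 2 * π * Complex.I * conj t / (2 * π) = Complex.I * conj t := by field_simp
  have h_phase : 2 * π * Complex.I * t * (2 * π * Complex.I * conj t) / (2 * π) =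
      -(2 * π * (t * conj t)) := by
    rw [div_eq_iff (by simp [hπ])]
    linear_combination 4 * π ^ 2 * t * conj t * Complex.I_sq
  simp only [h_exponent]
  rw [integral_smul_measure, Complex.integral_pow_mul_cexp_neg_mul_mul_conj_add h_two_pi, h_mass,
    h_ratio, h_phase, ENNReal.toReal_ofNat, Complex.real_smul]
  push_cast
  ring
end

section
/- Let n ≥ 2, ε ∈ {+1, −1}, let t_1,…,t_{n−1} and a_1,…,a_n be positive real numbers. Then ∫ exp(−π Σ_{i=1}^{n−1} (a_i²/t_i² + Σ_{j=i+1}^{n} (a_j²/t_i²) x_{i,j}²)) · exp(−2π ε i Σ_{i=1}^{n−1} x_{i,i+1}) ∏_{1 ≤ i < j ≤ n} dx_{i,j} = ∏_{i=1}^{n−1} exp(−π (t_i²/a_{i+1}² + a_i²/t_i²)) · t_i^{n−i} · a_{i+1}^{−i}, where the integral is over all real tuples (x_{i,j})_{1 ≤ i < j ≤ n} with Lebesgue measure. -/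
/-!
The integrand factorises over the coordinates `x_{ij}`: each one carries the Gaussian
`exp (-π A x²)` with `A = a_j² / t_i²`, twisted by the character `exp (-2π i ε x)` on the
superdiagonal `j = i + 1` and untwisted elsewhere. By Fubini and the Fourier transform of the
Gaussian, the coordinate contributes `A^{-1/2} exp (-π ε² / A) = (t_i / a_j) exp (-π t_i² / a_j²)`
on the superdiagonal and `t_i / a_j` off it. Since `t_i` occurs in the `n - 1 - i` pairs `(i, j)`
and `a_j` in the `j` pairs `(i, j)` (indices from `0`), the product of these factors, times the
constant `exp (-π Σ a_i² / t_i²)`, is the right-hand side.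
-/

open Real MeasureTheory Complex Finset

section Pairs

variable {n : ℕ}

lemma lt_pairs_fst_lt (p : {p : Fin n × Fin n // p.1 < p.2}) : (p.val.1 : ℕ) < n - 1 := by
  have := p.val.2.isLt
  have := Fin.lt_def.mp p.prop
  omega

lemma prod_lt_pairs {M : Type*} [CommMonoid M] (g : Fin n × Fin n → M) :
    ∏ p : {p : Fin n × Fin n // p.1 < p.2}, g p.val
      = ∏ i : Fin n, ∏ j : Fin n, if i < j then g (i, j) else 1 := by
  rw [← Finset.prod_subtype (univ.filter fun p : Fin n × Fin n => p.1 < p.2) (by simp) g,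
    Finset.prod_filter, Fintype.prod_prod_type]

lemma prod_lt_pairs_fst {M : Type*} [CommMonoid M] (f : ℕ → M) :
    ∏ p : {p : Fin n × Fin n // p.1 < p.2}, f p.val.1
      = ∏ i ∈ range (n - 1), f i ^ (n - 1 - i) := by
  have hcount (i : Fin n) : (∏ j : Fin n, if i < j then f i else 1) = f i ^ (n - 1 - i) := by
    rw [← Finset.prod_filter, Finset.prod_const, Finset.filter_lt_eq_Ioi, Fin.card_Ioi]
  rw [prod_lt_pairs (fun p => f p.1), Fintype.prod_congr _ _ hcount,
    Fin.prod_univ_eq_prod_range (fun i => f i ^ (n - 1 - i))]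
  rcases n with _ | m
  · rfl
  · simp [Finset.prod_range_succ]

lemma prod_lt_pairs_snd {M : Type*} [CommMonoid M] (f : ℕ → M) :
    ∏ p : {p : Fin n × Fin n // p.1 < p.2}, f p.val.2
      = ∏ i ∈ range (n - 1), f (i + 1) ^ (i + 1) := by
  have hcount (j : Fin n) : (∏ i : Fin n, if i < j then f j else 1) = f j ^ (j : ℕ) := by
    rw [← Finset.prod_filter, Finset.prod_const, Finset.filter_gt_eq_Iio, Fin.card_Iio]
  rw [prod_lt_pairs (fun p => f p.2), Finset.prod_comm, Fintype.prod_congr _ _ hcount,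
    Fin.prod_univ_eq_prod_range (fun j => f j ^ j)]
  rcases n with _ | m
  · rfl
  · simp [Finset.prod_range_succ']

def superdiag (n : ℕ) (i : Fin (n - 1)) : {p : Fin n × Fin n // p.1 < p.2} :=
  ⟨(⟨i, by omega⟩, ⟨i + 1, by omega⟩), Fin.mk_lt_mk.mpr (Nat.lt_succ_self _)⟩

@[simp]
lemma superdiag_fst_val (i : Fin (n - 1)) : ((superdiag n i).val.1 : ℕ) = i := rfl

@[simp]
lemma superdiag_snd_val (i : Fin (n - 1)) : ((superdiag n i).val.2 : ℕ) = i + 1 := rfl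

lemma sum_ite_superdiag {M : Type*} [AddCommMonoid M]
    (g : {p : Fin n × Fin n // p.1 < p.2} → M) :
    ∑ p : {p : Fin n × Fin n // p.1 < p.2}, (if (p.val.2 : ℕ) = p.val.1 + 1 then g p else 0)
      = ∑ i, g (superdiag n i) := by
  rw [← Finset.sum_filter]
  refine (Finset.sum_bij (fun i _ => superdiag n i) (by simp [superdiag]) ?_ ?_
    fun _ _ => rfl).symm
  · intro i _ j _ h
    simpa [superdiag, Fin.ext_iff] using h
  · rintro ⟨⟨i, j⟩, hij⟩ hp
    simp only [Finset.mem_filter, Finset.mem_univ, true_and] at hp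
    exact ⟨⟨i, by omega⟩, Finset.mem_univ _, by simp [superdiag, Fin.ext_iff, hp]⟩

end Pairs

theorem integral_cexp_neg_pi_sum_mul_sq_sub_two_pi_I_sum_mul {ι : Type*} [Fintype ι]
    {A : ι → ℝ} (hA : ∀ i, 0 < A i) (ξ : ι → ℝ) :
    ∫ x : ι → ℝ, cexp (-(π * ∑ i, A i * x i ^ 2 : ℝ) - 2 * π * I * (∑ i, ξ i * x i : ℝ)) =
      ((∏ i, (√(A i))⁻¹ * rexp (-(π * ξ i ^ 2 / A i)) : ℝ) : ℂ) := by
  have hb : ∀ i, 0 < ((π * A i : ℝ) : ℂ).re := fun i => by simpa using mul_pos pi_pos (hA i)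
  have hπ : (π : ℂ) ≠ 0 := ofReal_ne_zero.mpr pi_ne_zero
  convert GaussianFourier.integral_cexp_neg_sum_mul_add hb (fun i => -2 * π * I * ξ i) using 1
  · congr 1 with x
    push_cast
    simp only [Finset.mul_sum, ← Finset.sum_neg_distrib, ← Finset.sum_sub_distrib,
      ← Finset.sum_add_distrib]
    exact congrArg cexp (Finset.sum_congr rfl fun i _ => by ring)
  · push_cast
    refine Finset.prod_congr rfl fun i _ => ?_
    have hAi : (A i : ℂ) ≠ 0 := ofReal_ne_zero.mpr (hA i).ne'
    congr 1
    · rw [div_mul_cancel_left₀ hπ, ← ofReal_inv, sqrt_eq_rpow, ← inv_rpow (hA i).le,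
        ofReal_cpow (inv_nonneg.mpr (hA i).le)]
      norm_num
    · congr 1
      field_simp
      linear_combination (-4 * ξ i ^ 2 : ℂ) * I_sq

lemma inv_sqrt_mul_exp_ite_eq {ε : ℝ} (hε : ε ^ 2 = 1) {s r : ℝ} (hs : 0 < s) (hr : 0 < r)
    (P : Prop) [Decidable P] :
    (√(r ^ 2 / s ^ 2))⁻¹ * rexp (-(π * (if P then ε else 0) ^ 2 / (r ^ 2 / s ^ 2)))
      = s / r * rexp (-(π * if P then s ^ 2 / r ^ 2 else 0)) := by
  rw [← div_pow, sqrt_sq (by positivity), inv_div]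
  split_ifs
  · rw [hε]
    field_simp
  · simp

lemma exp_mul_prod_gaussian_factors_eq (n : ℕ) {ε : ℝ} (hε : ε ^ 2 = 1) (t a : ℕ → ℝ)
    (ht : ∀ i, i < n - 1 → 0 < t i) (ha : ∀ i, i < n → 0 < a i) :
    rexp (-(π * ∑ i ∈ range (n - 1), a i ^ 2 / t i ^ 2)) *
        ∏ p : {p : Fin n × Fin n // p.1 < p.2}, (√(a p.val.2 ^ 2 / t p.val.1 ^ 2))⁻¹ *
          rexp (-(π * (if (p.val.2 : ℕ) = p.val.1 + 1 then ε else 0) ^ 2 /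
            (a p.val.2 ^ 2 / t p.val.1 ^ 2)))
      = ∏ i : Fin (n - 1), rexp (-(π * (t i ^ 2 / a (i + 1) ^ 2 + a i ^ 2 / t i ^ 2))) *
          t i ^ (n - 1 - i) * a (i + 1) ^ (-((i : ℤ) + 1)) := by
  simp_rw [fun p => inv_sqrt_mul_exp_ite_eq hε (ht _ (lt_pairs_fst_lt p)) (ha _ p.val.2.isLt)]
  rw [prod_mul_distrib, prod_div_distrib, prod_lt_pairs_fst (fun i => t i),
    prod_lt_pairs_snd (fun i => a i), ← Real.exp_sum, Finset.sum_neg_distrib, ← mul_sum,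
    sum_ite_superdiag (fun p => t p.val.1 ^ 2 / a p.val.2 ^ 2)]
  simp only [superdiag_fst_val, superdiag_snd_val]
  rw [Fin.prod_univ_eq_prod_range (fun i => rexp (-(π * (t i ^ 2 / a (i + 1) ^ 2 +
      a i ^ 2 / t i ^ 2))) * t i ^ (n - 1 - i) * a (i + 1) ^ (-((i : ℤ) + 1))),
    Fin.sum_univ_eq_sum_range (fun i => t i ^ 2 / a (i + 1) ^ 2)]
  have hzpow (i : ℕ) : a (i + 1) ^ (-((i : ℤ) + 1)) = (a (i + 1) ^ (i + 1))⁻¹ := by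
    rw [zpow_neg]
    norm_cast
  simp only [hzpow]
  simp only [mul_add, neg_add, Real.exp_add, prod_mul_distrib, prod_inv_distrib,
    ← Real.exp_sum, ← mul_neg, ← mul_sum, sum_neg_distrib]
  ring

/-- Real Gaussian integral with character over upper triangular unipotent coordinates:
`∫ exp(−π Σ_{i=1}^{n−1} (a_i²/t_i² + Σ_{j>i} (a_j²/t_i²) x_{i,j}²)) exp(−2π ε i Σ x_{i,i+1}) ∏ dx
  = ∏_{i=1}^{n−1} exp(−π (t_i²/a_{i+1}² + a_i²/t_i²)) t_i^{n−i} a_{i+1}^{−i}`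
(indices written here `0`-based: the paper's `i` is `i+1`). -/
theorem gaussian_unipotent_character_integral_real (n : ℕ) (ε : ℝ)
    (hε : ε = 1 ∨ ε = -1) (t a : ℕ → ℝ)
    (ht : ∀ i, i < n - 1 → 0 < t i) (ha : ∀ i, i < n → 0 < a i) :
    (∫ x : {p : Fin n × Fin n // p.1 < p.2} → ℝ,
        (Real.exp (-(π * ((∑ i ∈ Finset.range (n - 1), a i ^ 2 / t i ^ 2) +
            ∑ p : {p : Fin n × Fin n // p.1 < p.2},
              a p.val.2 ^ 2 / t p.val.1 ^ 2 * x p ^ 2))) : ℂ) *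
          Complex.exp (-(2 * π * (ε : ℂ) * Complex.I *
            ∑ i : Fin (n - 1),
              ((x ⟨(⟨i.val, by have h := i.isLt; omega⟩,
                    ⟨i.val + 1, by have h := i.isLt; omega⟩),
                  Fin.mk_lt_mk.mpr (Nat.lt_succ_self _)⟩ : ℝ) : ℂ)))) =
      ∏ i : Fin (n - 1),
        ((Real.exp (-(π * (t i.val ^ 2 / a (i.val + 1) ^ 2 + a i.val ^ 2 / t i.val ^ 2))) *
            t i.val ^ (n - 1 - i.val) *
            a (i.val + 1) ^ (-((i.val : ℤ) + 1)) : ℝ) : ℂ) := by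
  have hε2 : ε ^ 2 = 1 := by rcases hε with rfl | rfl <;> norm_num
  have hA (p : {p : Fin n × Fin n // p.1 < p.2}) : 0 < a p.val.2 ^ 2 / t p.val.1 ^ 2 := by
    have := ht _ (lt_pairs_fst_lt p)
    have := ha _ p.val.2.isLt
    positivity
  have hphase (x : {p : Fin n × Fin n // p.1 < p.2} → ℝ) :
      ∑ p, (if (p.val.2 : ℕ) = p.val.1 + 1 then ε else 0) * x p
        = ε * ∑ i, x (superdiag n i) := by
    simp only [ite_mul, zero_mul, sum_ite_superdiag (fun p => ε * x p), mul_sum]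
  calc _ = ∫ x : {p : Fin n × Fin n // p.1 < p.2} → ℝ,
        (rexp (-(π * ∑ i ∈ range (n - 1), a i ^ 2 / t i ^ 2)) : ℂ) *
          cexp (-(π * ∑ p, a p.val.2 ^ 2 / t p.val.1 ^ 2 * x p ^ 2 : ℝ) - 2 * π * I *
            (∑ p, (if (p.val.2 : ℕ) = p.val.1 + 1 then ε else 0) * x p : ℝ)) := by
        refine integral_congr_ae (ae_of_all _ fun x => ?_)
        dsimp only
        rw [hphase x, ofReal_exp, ofReal_exp, ← Complex.exp_add, ← Complex.exp_add]
        congr 1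
        push_cast
        unfold superdiag
        ring
    _ = _ := by
        rw [integral_const_mul, integral_cexp_neg_pi_sum_mul_sq_sub_two_pi_I_sum_mul hA,
          ← ofReal_mul, exp_mul_prod_gaussian_factors_eq n hε2 t a ht ha, ofReal_prod]
end

section
/- For every n ≥ 1 and every γ = (γ_1,…,γ_n) ∈ ℕ_0^n with l = γ_1 + ⋯ + γ_n, one has r(Q(γ)) = (γ_1! γ_2! ⋯ γ_n!) / l!; equivalently, r(Q(γ))^{−1} equals the multinomial coefficient b(γ) = l!/(γ_1! ⋯ γ_n!). -/
/-- The product `r(M)` of ratios of factorials attached to an integral triangular array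
`M = (m_{i,j})_{1 ≤ i ≤ j ≤ n}` (entries accessed as `M i j`):
`r(M) = ∏_{1 ≤ i ≤ j < k ≤ n} (m_{i,k} − m_{j,k−1} − i + j)! (m_{i,k−1} − m_{j+1,k} − i + j)! /
        ((m_{i,k−1} − m_{j,k−1} − i + j)! (m_{i,k} − m_{j+1,k} − i + j)!)`. -/
def rGT (n : ℕ) (M : ℕ → ℕ → ℤ) : ℚ :=
  ∏ i ∈ Finset.Icc 1 n, ∏ j ∈ Finset.Icc i n, ∏ k ∈ Finset.Icc (j + 1) n,
    ((((M i k - M j (k - 1) - (i : ℤ) + (j : ℤ)).toNat.factorial : ℚ) *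
      ((M i (k - 1) - M (j + 1) k - (i : ℤ) + (j : ℤ)).toNat.factorial : ℚ)) /
     (((M i (k - 1) - M j (k - 1) - (i : ℤ) + (j : ℤ)).toNat.factorial : ℚ) *
      ((M i k - M (j + 1) k - (i : ℤ) + (j : ℤ)).toNat.factorial : ℚ)))

/-- Membership `M ∈ G(λ)` for an integral triangular array of size `n`:
top row equals `λ` and the interlacing conditions hold. -/
def isGT (n : ℕ) (lam : ℕ → ℤ) (M : ℕ → ℕ → ℤ) : Prop :=
  (∀ i, 1 ≤ i → i ≤ n → M i n = lam i) ∧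
  ∀ j k, 1 ≤ j → j < k → k ≤ n → M j (k - 1) ≤ M j k ∧ M (j + 1) k ≤ M j (k - 1)

/-- The weight `γ^M_j = Σ_{i=1}^{j} m_{i,j} − Σ_{i=1}^{j−1} m_{i,j−1}`. -/
def wtGT (M : ℕ → ℕ → ℤ) (j : ℕ) : ℤ :=
  (∑ i ∈ Finset.Icc 1 j, M i j) - ∑ i ∈ Finset.Icc 1 (j - 1), M i (j - 1)

/-- The array `Q(γ)`: first row `(1,j)`-entry `γ_1 + ⋯ + γ_j`, other entries `0`. -/
def QGT (γ : ℕ → ℕ) : ℕ → ℕ → ℤ :=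
  fun i j => if i = 1 then ∑ k ∈ Finset.Icc 1 j, (γ k : ℤ) else 0

/-- The array `H(λ)` whose `(i,j)`-entry is `λ_i`. -/
def HGT (lam : ℕ → ℤ) : ℕ → ℕ → ℤ := fun i _ => lam i

/-!
Every entry of `Q(γ)` outside the first row vanishes, so every factor of `r(Q(γ))` with
`(i, j) ≠ (1, 1)` has the shape `A! B! / (B! A!)` and equals `1`. With the partial sums
`S_k = γ_1 + ⋯ + γ_k`, the remaining factor for `k` is `γ_k! S_{k-1}! / S_k! = 1 / C(S_k, γ_k)`,
and the product of these binomial coefficients is the multinomial coefficient `b(γ)`.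
-/

open Finset Nat

def rFactor (M : ℕ → ℕ → ℤ) (i j k : ℕ) : ℚ :=
  (((M i k - M j (k - 1) - (i : ℤ) + (j : ℤ)).toNat ! : ℚ) *
      ((M i (k - 1) - M (j + 1) k - (i : ℤ) + (j : ℤ)).toNat ! : ℚ)) /
    (((M i (k - 1) - M j (k - 1) - (i : ℤ) + (j : ℤ)).toNat ! : ℚ) *
      ((M i k - M (j + 1) k - (i : ℤ) + (j : ℤ)).toNat ! : ℚ))

lemma rGT_eq_prod_rFactor (n : ℕ) (M : ℕ → ℕ → ℤ) :
    rGT n M = ∏ i ∈ Icc 1 n, ∏ j ∈ Icc i n, ∏ k ∈ Icc (j + 1) n, rFactor M i j k :=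
  rfl

lemma rFactor_eq_one_of_eq {M : ℕ → ℕ → ℤ} {i j k : ℕ} (h : M j (k - 1) = M (j + 1) k) :
    rFactor M i j k = 1 := by
  rw [rFactor, h, div_eq_one_iff_eq (by positivity), mul_comm]

lemma QGT_one (γ : ℕ → ℕ) (j : ℕ) : QGT γ 1 j = ((∑ k ∈ Icc 1 j, γ k : ℕ) : ℤ) := by
  simp [QGT]

lemma QGT_of_ne_one (γ : ℕ → ℕ) {i : ℕ} (hi : i ≠ 1) (j : ℕ) : QGT γ i j = 0 :=
  if_neg hi

lemma rFactor_QGT_one_one (γ : ℕ → ℕ) (m : ℕ) :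
    rFactor (QGT γ) 1 1 (m + 1) = (((∑ k ∈ Icc 1 (m + 1), γ k).choose (γ (m + 1)) : ℕ) : ℚ)⁻¹ := by
  have hS := sum_Icc_succ_top (Nat.le_add_left 1 m) γ
  rw [rFactor, QGT_one, QGT_one, QGT_of_ne_one γ (by decide : 1 + 1 ≠ 1), Nat.add_sub_cancel, hS]
  simp only [Nat.cast_one, Nat.cast_add, sub_zero, sub_add_cancel, add_sub_cancel_left, sub_self,
    Int.toNat_natCast, Int.toNat_zero, factorial_zero, cast_one, one_mul]
  rw [← Nat.cast_add, Int.toNat_natCast, add_comm (∑ k ∈ Icc 1 m, γ k), cast_add_choose, inv_div]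

lemma rGT_QGT_eq_prod_inv_choose (γ : ℕ → ℕ) (n : ℕ) :
    rGT n (QGT γ) = ∏ k ∈ Icc 2 n, (((∑ t ∈ Icc 1 k, γ t).choose (γ k) : ℕ) : ℚ)⁻¹ := by
  have hQ : ∀ {j k}, 2 ≤ j → QGT γ j (k - 1) = QGT γ (j + 1) k := fun hj =>
    (QGT_of_ne_one γ (by omega) _).trans (QGT_of_ne_one γ (by omega) _).symm
  rw [rGT_eq_prod_rFactor, prod_eq_single 1, prod_eq_single 1]
  · refine prod_congr rfl fun k hk => ?_
    obtain ⟨m, rfl⟩ : ∃ m, k = m + 1 := ⟨k - 1, by simp at hk; omega⟩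
    exact rFactor_QGT_one_one γ m
  · intro j hj hj₁
    refine prod_eq_one fun k _ => rFactor_eq_one_of_eq (hQ ?_)
    simp only [mem_Icc] at hj; omega
  · intro h; simp_all
  · intro i hi hi₁
    refine prod_eq_one fun j hj => prod_eq_one fun k _ => rFactor_eq_one_of_eq (hQ ?_)
    simp only [mem_Icc] at hi hj; omega
  · intro h; simp_all

lemma multinomial_Icc_eq_prod_choose (γ : ℕ → ℕ) (n : ℕ) :
    multinomial (Icc 1 n) γ = ∏ k ∈ Icc 1 n, (∑ t ∈ Icc 1 k, γ t).choose (γ k) := by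
  induction n with
  | zero => simp
  | succ n ih =>
    rw [← insert_Icc_right_eq_Icc_add_one (Nat.le_add_left 1 n),
      multinomial_insert (by simp), ih, prod_insert (by simp),
      sum_Icc_succ_top (Nat.le_add_left 1 n), add_comm]

lemma rGT_QGT_eq_inv_multinomial (γ : ℕ → ℕ) (n : ℕ) :
    rGT n (QGT γ) = (multinomial (Icc 1 n) γ : ℚ)⁻¹ := by
  rw [rGT_QGT_eq_prod_inv_choose, multinomial_Icc_eq_prod_choose, cast_prod, prod_inv_distrib]
  congr 1
  refine Finset.prod_subset (Icc_subset_Icc_left (by norm_num : 1 ≤ 2)) ?_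
  intro k hk hk₂
  obtain rfl : k = 1 := by simp only [mem_Icc] at hk hk₂; omega
  simp

theorem rGT_QGT_general (n : ℕ) (γ : ℕ → ℕ) (l : ℕ)
    (hl : l = ∑ k ∈ Finset.Icc 1 n, γ k) :
    rGT n (QGT γ) = (∏ k ∈ Finset.Icc 1 n, ((γ k).factorial : ℚ)) / (l.factorial : ℚ) ∧
    (rGT n (QGT γ))⁻¹ = (l.factorial : ℚ) / ∏ k ∈ Finset.Icc 1 n, ((γ k).factorial : ℚ) := by
  have hspec : (∏ k ∈ Icc 1 n, ((γ k)! : ℚ)) * multinomial (Icc 1 n) γ = l ! := by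
    rw [hl]; exact_mod_cast multinomial_spec (Icc 1 n) γ
  have hb : (multinomial (Icc 1 n) γ : ℚ) ≠ 0 := by exact_mod_cast (multinomial_pos _ _).ne'
  rw [rGT_QGT_eq_inv_multinomial, inv_inv, ← hspec]
  constructor <;> field_simp

/-- `r(Q(γ)) = γ_1! ⋯ γ_n! / l!` where `l = γ_1 + ⋯ + γ_n`. -/
theorem rGT_QGT (n : ℕ) (hn : 1 ≤ n) (γ : ℕ → ℕ) (l : ℕ)
    (hl : l = ∑ k ∈ Finset.Icc 1 n, γ k) :
    rGT n (QGT γ) = (∏ k ∈ Finset.Icc 1 n, ((γ k).factorial : ℚ)) / (l.factorial : ℚ) ∧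
    (rGT n (QGT γ))⁻¹ = (l.factorial : ℚ) / ∏ k ∈ Finset.Icc 1 n, ((γ k).factorial : ℚ) :=
  rGT_QGT_general n γ l hl
end

section
/- Let n ≥ 2, let λ = (λ_1,…,λ_n) ∈ ℤ^n with λ_1 ≥ ⋯ ≥ λ_n, and let μ = (μ_1,…,μ_{n−1}) ∈ Ξ⁺(λ). Let H(μ)[λ] denote the integral triangular array of size n whose (i,n)-entry is λ_i for 1 ≤ i ≤ n and whose (i,j)-entry is μ_i for all 1 ≤ i ≤ j ≤ n−1. Then H(μ)[λ] ∈ G(λ) and r(H(μ)[λ]) = ∏_{1 ≤ i ≤ j ≤ n−1} (λ_i − μ_j − i + j)! (μ_i − λ_{j+1} − i + j)! / ((μ_i − μ_j − i + j)! (λ_i − λ_{j+1} − i + j)!). -/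
/-! Below the top row every column of `H(μ)[λ]` repeats the previous one, and each factor of
`r` attached to such a pair of columns is a ratio of two equal products of factorials. Only the
factors with `k = n` survive, and they are the factors of the claimed product. -/

open Finset

def rGTFactor (M : ℕ → ℕ → ℤ) (i j k : ℕ) : ℚ :=
  (((M i k - M j (k - 1) - (i : ℤ) + (j : ℤ)).toNat.factorial : ℚ) *
      ((M i (k - 1) - M (j + 1) k - (i : ℤ) + (j : ℤ)).toNat.factorial : ℚ)) /
    (((M i (k - 1) - M j (k - 1) - (i : ℤ) + (j : ℤ)).toNat.factorial : ℚ) *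
      ((M i k - M (j + 1) k - (i : ℤ) + (j : ℤ)).toNat.factorial : ℚ))

/-- The paper's `H(μ)[λ]`. -/
def HGTWithTopRow (n : ℕ) (lam mu : ℕ → ℤ) : ℕ → ℕ → ℤ :=
  fun i j => if j = n then lam i else mu i

theorem rGT_eq_prod_rGTFactor (n : ℕ) (M : ℕ → ℕ → ℤ) :
    rGT n M = ∏ i ∈ Icc 1 n, ∏ j ∈ Icc i n, ∏ k ∈ Icc (j + 1) n, rGTFactor M i j k :=
  rfl

theorem rGTFactor_eq_one {M : ℕ → ℕ → ℤ} {i j k : ℕ} (hi : M i k = M i (k - 1))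
    (hj : M (j + 1) k = M (j + 1) (k - 1)) : rGTFactor M i j k = 1 := by
  rw [rGTFactor, hi, hj]
  exact div_self (by positivity)

theorem rGT_eq_prod_rGTFactor_top {n : ℕ} {M : ℕ → ℕ → ℤ}
    (hM : ∀ i k, k < n → M i k = M i (k - 1)) :
    rGT n M = ∏ i ∈ Icc 1 (n - 1), ∏ j ∈ Icc i (n - 1), rGTFactor M i j n := by
  have hsub : ∀ a, Icc a (n - 1) ⊆ Icc a n := fun a => Icc_subset_Icc_right (Nat.sub_le n 1)
  have hdrop : ∀ a x, x ∈ Icc a n → x ∉ Icc a (n - 1) → x = n := by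
    intro a x hx hx'
    simp only [mem_Icc] at hx hx'
    omega
  rw [rGT_eq_prod_rGTFactor]
  calc _ = ∏ i ∈ Icc 1 n, ∏ j ∈ Icc i (n - 1), rGTFactor M i j n := by
        refine prod_congr rfl fun i hi => ?_
        rw [← prod_subset (hsub i)]
        · refine prod_congr rfl fun j hj => ?_
          simp only [mem_Icc] at hi hj
          refine prod_eq_single_of_mem n (by simp only [mem_Icc]; omega) fun k hk _ => ?_
          simp only [mem_Icc] at hk
          exact rGTFactor_eq_one (hM i k (by omega)) (hM (j + 1) k (by omega))
        · intro j hj hj'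
          rw [hdrop i j hj hj', Icc_eq_empty (by omega), prod_empty]
    _ = _ := by
        refine (prod_subset (hsub 1) fun i hi hi' => ?_).symm
        obtain rfl := hdrop 1 i hi hi'
        simp only [mem_Icc] at hi
        rw [Icc_eq_empty (by omega), prod_empty]

theorem isGT_HGTWithTopRow {n : ℕ} {lam mu : ℕ → ℤ}
    (hmu_mono : ∀ i, 1 ≤ i → i < n - 1 → mu (i + 1) ≤ mu i)
    (hmu : ∀ i, 1 ≤ i → i ≤ n - 1 → mu i ≤ lam i ∧ lam (i + 1) ≤ mu i) :
    isGT n lam (HGTWithTopRow n lam mu) := by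
  refine ⟨fun i _ _ => if_pos rfl, fun j k hj hjk hkn => ?_⟩
  simp only [HGTWithTopRow, if_neg (show k - 1 ≠ n by omega)]
  rcases eq_or_ne k n with rfl | hk
  · simpa using hmu j hj (by omega)
  · simpa [hk] using hmu_mono j hj (by omega)

theorem rGTFactor_HGTWithTopRow_top {n : ℕ} (lam mu : ℕ → ℤ) (i : ℕ) {j : ℕ} (hj : j < n) :
    rGTFactor (HGTWithTopRow n lam mu) i j n =
      (((lam i - mu j - (i : ℤ) + (j : ℤ)).toNat.factorial : ℚ) *
          ((mu i - lam (j + 1) - (i : ℤ) + (j : ℤ)).toNat.factorial : ℚ)) /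
        (((mu i - mu j - (i : ℤ) + (j : ℤ)).toNat.factorial : ℚ) *
          ((lam i - lam (j + 1) - (i : ℤ) + (j : ℤ)).toNat.factorial : ℚ)) := by
  simp only [rGTFactor, HGTWithTopRow, ↓reduceIte, if_neg (show n - 1 ≠ n by omega)]

theorem rGT_HGT_mu_lambda_general (n : ℕ) (lam mu : ℕ → ℤ)
    (hmu_mono : ∀ i, 1 ≤ i → i < n - 1 → mu (i + 1) ≤ mu i)
    (hmu : ∀ i, 1 ≤ i → i ≤ n - 1 → mu i ≤ lam i ∧ lam (i + 1) ≤ mu i) :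
    isGT n lam (fun i j => if j = n then lam i else mu i) ∧
    rGT n (fun i j => if j = n then lam i else mu i) =
      ∏ i ∈ Finset.Icc 1 (n - 1), ∏ j ∈ Finset.Icc i (n - 1),
        ((((lam i - mu j - (i : ℤ) + (j : ℤ)).toNat.factorial : ℚ) *
          ((mu i - lam (j + 1) - (i : ℤ) + (j : ℤ)).toNat.factorial : ℚ)) /
         (((mu i - mu j - (i : ℤ) + (j : ℤ)).toNat.factorial : ℚ) *
          ((lam i - lam (j + 1) - (i : ℤ) + (j : ℤ)).toNat.factorial : ℚ))) := by
  have hstable : ∀ i k, k < n → HGTWithTopRow n lam mu i k = HGTWithTopRow n lam mu i (k - 1) :=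
    fun i k hk => by simp only [HGTWithTopRow, if_neg hk.ne, if_neg (show k - 1 ≠ n by omega)]
  refine ⟨isGT_HGTWithTopRow hmu_mono hmu, ?_⟩
  change rGT n (HGTWithTopRow n lam mu) = _
  rw [rGT_eq_prod_rGTFactor_top hstable]
  refine prod_congr rfl fun i hi => prod_congr rfl fun j hj => ?_
  exact rGTFactor_HGTWithTopRow_top lam mu i (by simp only [mem_Icc] at hi hj; omega)

/-- For `μ ∈ Ξ⁺(λ)`, the array `H(μ)[λ]` (top row `λ`, all other rows `μ`) lies in `G(λ)`
and `r(H(μ)[λ]) = ∏_{1 ≤ i ≤ j ≤ n−1} (λ_i − μ_j − i + j)! (μ_i − λ_{j+1} − i + j)! /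
((μ_i − μ_j − i + j)! (λ_i − λ_{j+1} − i + j)!)`. -/
theorem rGT_HGT_mu_lambda (n : ℕ) (hn : 2 ≤ n) (lam mu : ℕ → ℤ)
    (hlam : ∀ i, 1 ≤ i → i < n → lam (i + 1) ≤ lam i)
    (hmu_mono : ∀ i, 1 ≤ i → i < n - 1 → mu (i + 1) ≤ mu i)
    (hmu : ∀ i, 1 ≤ i → i ≤ n - 1 → mu i ≤ lam i ∧ lam (i + 1) ≤ mu i) :
    isGT n lam (fun i j => if j = n then lam i else mu i) ∧
    rGT n (fun i j => if j = n then lam i else mu i) =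
      ∏ i ∈ Finset.Icc 1 (n - 1), ∏ j ∈ Finset.Icc i (n - 1),
        ((((lam i - mu j - (i : ℤ) + (j : ℤ)).toNat.factorial : ℚ) *
          ((mu i - lam (j + 1) - (i : ℤ) + (j : ℤ)).toNat.factorial : ℚ)) /
         (((mu i - mu j - (i : ℤ) + (j : ℤ)).toNat.factorial : ℚ) *
          ((lam i - lam (j + 1) - (i : ℤ) + (j : ℤ)).toNat.factorial : ℚ))) :=
  rGT_HGT_mu_lambda_general n lam mu hmu_mono hmu
end

section
/- Let n ≥ 2, let λ = (λ_1,…,λ_n) ∈ ℤ^n with λ_1 ≥ ⋯ ≥ λ_n, fix indices 1 ≤ i ≤ j ≤ n−1, and let M = (m_{p,q}) ∈ G(λ) be such that M + Δ_{i,j} ∈ G(λ), where Δ_{i,j} is the integral triangular array of size n with 1 at the (i,j)-th entry and 0 elsewhere. Define the rational numbers a_{i,j}(M) = [∏_{h=1}^{i} (m_{h,j+1} − m_{i,j} − h + i) / ∏_{h=1}^{i−1} (m_{h,j} − m_{i,j} − h + i)] · ∏_{h=2}^{i} (m_{h−1,j−1} − m_{i,j} − h + i)/(m_{h−1,j} −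 m_{i,j} − h + i) and A_{i,j}(M) = [∏_{h=1}^{j+1} (m_{h,j+1} − m_{i,j} − h + i)] · [∏_{h=1}^{j−1} (m_{h,j−1} − m_{i,j} − h + i − 1)] / ∏_{1 ≤ h ≤ j, h ≠ i} (m_{h,j} − m_{i,j} − h + i)(m_{h,j} − m_{i,j} − h + i − 1). Then all the denominators occurring are nonzero and a_{i,j}(M)² · r(M + Δ_{i,j}) = |A_{i,j}(M)| · r(M). -/
/-- The rational number `a_{i,j}(M)`. -/
def aGT (M : ℕ → ℕ → ℤ) (i j : ℕ) : ℚ :=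
  ((∏ h ∈ Finset.Icc 1 i, ((M h (j + 1) - M i j - (h : ℤ) + (i : ℤ) : ℤ) : ℚ)) /
   (∏ h ∈ Finset.Icc 1 (i - 1), ((M h j - M i j - (h : ℤ) + (i : ℤ) : ℤ) : ℚ))) *
  ∏ h ∈ Finset.Icc 2 i,
    (((M (h - 1) (j - 1) - M i j - (h : ℤ) + (i : ℤ) : ℤ) : ℚ) /
     ((M (h - 1) j - M i j - (h : ℤ) + (i : ℤ) : ℤ) : ℚ))

/-- The rational number `A_{i,j}(M)`. -/
def AGT (M : ℕ → ℕ → ℤ) (i j : ℕ) : ℚ :=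
  ((∏ h ∈ Finset.Icc 1 (j + 1), ((M h (j + 1) - M i j - (h : ℤ) + (i : ℤ) : ℤ) : ℚ)) *
   (∏ h ∈ Finset.Icc 1 (j - 1), ((M h (j - 1) - M i j - (h : ℤ) + (i : ℤ) - 1 : ℤ) : ℚ))) /
  ∏ h ∈ (Finset.Icc 1 j).erase i,
    (((M h j - M i j - (h : ℤ) + (i : ℤ) : ℤ) : ℚ) *
     ((M h j - M i j - (h : ℤ) + (i : ℤ) - 1 : ℤ) : ℚ))

/-!
`r(M)` is a product of factorials `x!` of integer linear forms `x` in the entries of `M`, all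
nonnegative on `G(λ)`. Raising `m_{i,j}` by one moves each such argument by at most one, so by
`(x + 1)! = (x + 1) x!` the ratio `r(M + Δ_{i,j}) / r(M)` is the product of the arguments that
rise (taken after the change) over the product of those that drop (taken before it), and each of
these sets of arguments lies on a few lines `(i, ·, k)`, `(·, b, k)` of the index triples. In terms
of the linear forms `m_{h,q} − m_{i,j} − h + i` this reads
`a_{i,j}(M)² r(M + Δ_{i,j}) = −A_{i,j}(M) r(M)`, and positivity of `r` forces `A_{i,j}(M) ≤ 0`.
All denominators are nonzero because `M + Δ_{i,j} ∈ G(λ)` makes the interlacing inequalities at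
`m_{i,j}` strict.
-/

open Finset

/-- The factorial `x!` as it occurs in `rGT`; note that it is `1` for `x < 0`. -/
def toNatFactorial (x : ℤ) : ℚ := (x.toNat.factorial : ℚ)

lemma toNatFactorial_pos (x : ℤ) : 0 < toNatFactorial x := by
  unfold toNatFactorial
  exact_mod_cast x.toNat.factorial_pos

lemma toNatFactorial_add_one {x : ℤ} (hx : 0 ≤ x) :
    toNatFactorial (x + 1) = (x + 1) * toNatFactorial x := by
  have h : (x + 1).toNat = x.toNat + 1 := by omega
  have hcast : ((x.toNat : ℕ) : ℚ) = x := by exact_mod_cast Int.toNat_of_nonneg hx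
  rw [toNatFactorial, toNatFactorial, h, Nat.factorial_succ, Nat.cast_mul, Nat.cast_succ, hcast]

lemma toNatFactorial_mul_ite_lt {u v : ℤ} (hu : 0 ≤ u) (hv : 0 ≤ v) (huv : |v - u| ≤ 1) :
    toNatFactorial v * (if v < u then (u : ℚ) else 1) =
      toNatFactorial u * (if u < v then (v : ℚ) else 1) := by
  rcases abs_le.mp huv with ⟨h₁, h₂⟩
  rcases lt_trichotomy u v with hlt | rfl | hgt
  · obtain rfl : v = u + 1 := by omega
    rw [if_neg (by omega), if_pos hlt, toNatFactorial_add_one hu]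
    push_cast
    ring
  · simp
  · obtain rfl : u = v + 1 := by omega
    rw [if_pos hgt, if_neg (by omega), toNatFactorial_add_one hv]
    push_cast
    ring

lemma prod_toNatFactorial_mul_prod_filter_lt {α : Type*} (s : Finset α) (x y : α → ℤ)
    (hx : ∀ t ∈ s, 0 ≤ x t) (hy : ∀ t ∈ s, 0 ≤ y t) (hxy : ∀ t ∈ s, |y t - x t| ≤ 1) :
    (∏ t ∈ s, toNatFactorial (y t)) * ∏ t ∈ s with y t < x t, (x t : ℚ) =
      (∏ t ∈ s, toNatFactorial (x t)) * ∏ t ∈ s with x t < y t, (y t : ℚ) := by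
  simp only [prod_filter, ← prod_mul_distrib]
  exact prod_congr rfl fun t ht => toNatFactorial_mul_ite_lt (hx t ht) (hy t ht) (hxy t ht)

lemma prod_filter_eq_prod_line_snd {β : Type*} [CommMonoid β] {s : Finset (ℕ × ℕ × ℕ)}
    {p : ℕ × ℕ × ℕ → Prop} [DecidablePred p] {a k : ℕ} {I : Finset ℕ}
    (h : ∀ t, t ∈ s ∧ p t ↔ t.1 = a ∧ t.2.1 ∈ I ∧ t.2.2 = k) (f : ℕ × ℕ × ℕ → β) :
    ∏ t ∈ s with p t, f t = ∏ b ∈ I, f (a, b, k) := by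
  refine prod_nbij' (fun t => t.2.1) (fun b => (a, b, k)) ?_ ?_ ?_ ?_ ?_ <;>
    simp +contextual [mem_filter, h, Prod.forall]

lemma prod_filter_eq_prod_line_fst {β : Type*} [CommMonoid β] {s : Finset (ℕ × ℕ × ℕ)}
    {p : ℕ × ℕ × ℕ → Prop} [DecidablePred p] {b k : ℕ} {I : Finset ℕ}
    (h : ∀ t, t ∈ s ∧ p t ↔ t.1 ∈ I ∧ t.2.1 = b ∧ t.2.2 = k) (f : ℕ × ℕ × ℕ → β) :
    ∏ t ∈ s with p t, f t = ∏ a ∈ I, f (a, b, k) := by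
  refine prod_nbij' (fun t => t.1) (fun a => (a, b, k)) ?_ ?_ ?_ ?_ ?_ <;>
    simp +contextual [mem_filter, h, Prod.forall]

lemma prod_toNatFactorial_mul_prod_line (s : Finset (ℕ × ℕ × ℕ)) (x y : ℕ × ℕ × ℕ → ℤ)
    (hx : ∀ t ∈ s, 0 ≤ x t) (hy : ∀ t ∈ s, 0 ≤ y t) (hxy : ∀ t ∈ s, |y t - x t| ≤ 1)
    {a b k k' : ℕ} {I J : Finset ℕ}
    (hdown : ∀ t, t ∈ s ∧ y t < x t ↔ t.1 ∈ I ∧ t.2.1 = b ∧ t.2.2 = k)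
    (hup : ∀ t, t ∈ s ∧ x t < y t ↔ t.1 = a ∧ t.2.1 ∈ J ∧ t.2.2 = k') :
    (∏ t ∈ s, toNatFactorial (y t)) * ∏ c ∈ I, (x (c, b, k) : ℚ) =
      (∏ t ∈ s, toNatFactorial (x t)) * ∏ c ∈ J, (y (a, c, k') : ℚ) := by
  have h := prod_toNatFactorial_mul_prod_filter_lt s x y hx hy hxy
  rwa [prod_filter_eq_prod_line_fst hdown, prod_filter_eq_prod_line_snd hup] at h

lemma prod_Icc_mul_prod_Icc {β : Type*} [CommMonoid β] (f : ℕ → β) {a b c : ℕ} (hab : a ≤ b + 1)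
    (hbc : b ≤ c) : (∏ h ∈ Icc a b, f h) * ∏ h ∈ Icc (b + 1) c, f h = ∏ h ∈ Icc a c, f h := by
  simp only [← Ico_add_one_right_eq_Icc]
  exact prod_Ico_consecutive f hab (by omega)

lemma prod_Icc_add_one {β : Type*} [CommMonoid β] (f : ℕ → β) (a b : ℕ) :
    ∏ h ∈ Icc a b, f (h + 1) = ∏ h ∈ Icc (a + 1) (b + 1), f h := by
  rw [← map_add_right_Icc, prod_map]
  rfl

lemma prod_erase_Icc {β : Type*} [CommMonoid β] (f : ℕ → β) {i j : ℕ} (hi : 1 ≤ i)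
    (hij : i ≤ j) :
    ∏ h ∈ (Icc 1 j).erase i, f h = (∏ h ∈ Icc 1 (i - 1), f h) * ∏ h ∈ Icc (i + 1) j, f h := by
  rw [← prod_union (disjoint_left.mpr fun h h₁ h₂ => by simp only [mem_Icc] at h₁ h₂; omega)]
  congr 1
  ext h
  simp only [mem_erase, mem_union, mem_Icc]
  omega

def gtTriples (n : ℕ) : Finset (ℕ × ℕ × ℕ) :=
  (Icc 1 n ×ˢ Icc 1 n ×ˢ Icc 1 n).filter fun t => t.1 ≤ t.2.1 ∧ t.2.1 < t.2.2

lemma mem_gtTriples {n : ℕ} {t : ℕ × ℕ × ℕ} :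
    t ∈ gtTriples n ↔ 1 ≤ t.1 ∧ t.1 ≤ t.2.1 ∧ t.2.1 < t.2.2 ∧ t.2.2 ≤ n := by
  simp only [gtTriples, mem_filter, mem_product, mem_Icc]
  omega

lemma prod_gtTriples {β : Type*} [CommMonoid β] (n : ℕ) (f : ℕ × ℕ × ℕ → β) :
    ∏ t ∈ gtTriples n, f t = ∏ a ∈ Icc 1 n, ∏ b ∈ Icc a n, ∏ k ∈ Icc (b + 1) n, f (a, b, k) := by
  refine (prod_finset_product' (gtTriples n) (Icc 1 n)
    (fun a => (Icc a n ×ˢ Icc 1 n).filter fun p => p.1 < p.2) (f := fun a p => f (a, p))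
    fun t => by simp only [mem_gtTriples, mem_filter, mem_product, mem_Icc]; omega).trans ?_
  refine prod_congr rfl fun a _ =>
    prod_finset_product' _ _ _ (f := fun b k => f (a, b, k)) fun p => ?_
  simp only [mem_filter, mem_product, mem_Icc]
  omega

section FactorialArguments

variable (M : ℕ → ℕ → ℤ) (t : ℕ × ℕ × ℕ)

def numArg₁ : ℤ := M t.1 t.2.2 - M t.2.1 (t.2.2 - 1) - t.1 + t.2.1
def numArg₂ : ℤ := M t.1 (t.2.2 - 1) - M (t.2.1 + 1) t.2.2 - t.1 + t.2.1
def denArg₁ : ℤ := M t.1 (t.2.2 - 1) - M t.2.1 (t.2.2 - 1) - t.1 + t.2.1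
def denArg₂ : ℤ := M t.1 t.2.2 - M (t.2.1 + 1) t.2.2 - t.1 + t.2.1

end FactorialArguments

lemma rGT_eq_prod_toNatFactorial (n : ℕ) (M : ℕ → ℕ → ℤ) :
    rGT n M = (∏ t ∈ gtTriples n, toNatFactorial (numArg₁ M t)) *
        (∏ t ∈ gtTriples n, toNatFactorial (numArg₂ M t)) /
      ((∏ t ∈ gtTriples n, toNatFactorial (denArg₁ M t)) *
        ∏ t ∈ gtTriples n, toNatFactorial (denArg₂ M t)) := by
  rw [← prod_mul_distrib, ← prod_mul_distrib, ← prod_div_distrib, prod_gtTriples]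
  rfl

lemma rGT_pos (n : ℕ) (M : ℕ → ℕ → ℤ) : 0 < rGT n M := by
  rw [rGT_eq_prod_toNatFactorial]
  have h := fun x => toNatFactorial_pos x
  exact div_pos (mul_pos (prod_pos fun t _ => h _) (prod_pos fun t _ => h _))
    (mul_pos (prod_pos fun t _ => h _) (prod_pos fun t _ => h _))

section Interlacing

variable {n : ℕ} {lam : ℕ → ℤ} {M : ℕ → ℕ → ℤ}

lemma isGT.row_le (hM : isGT n lam M) {p p' q : ℕ} (hp : 1 ≤ p) (hpp' : p ≤ p') (hp'q : p' ≤ q)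
    (hq : q ≤ n) : M p' q ≤ M p q := by
  induction p', hpp' using Nat.le_induction with
  | base => exact le_rfl
  | succ p' hpp' ih =>
    have := hM.2 p' q (by omega) (by omega) hq
    linarith [ih (by omega)]

lemma isGT.factorialArgs_nonneg (hM : isGT n lam M) {t : ℕ × ℕ × ℕ} (ht : t ∈ gtTriples n) :
    0 ≤ numArg₁ M t ∧ 0 ≤ numArg₂ M t ∧ 0 ≤ denArg₁ M t ∧ 0 ≤ denArg₂ M t := by
  obtain ⟨a, b, k⟩ := t
  obtain ⟨ha, hab, hbk, hk⟩ : 1 ≤ a ∧ a ≤ b ∧ b < k ∧ k ≤ n := mem_gtTriples.mp ht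
  have h₁ := hM.row_le ha hab (by omega : b ≤ k - 1) (by omega)
  have h₂ := hM.row_le ha (by omega : a ≤ b + 1) hbk hk
  have h₃ := hM.2 b k (by omega) hbk hk
  have h₄ := hM.2 a k ha (by omega) hk
  simp only [numArg₁, numArg₂, denArg₁, denArg₂]
  omega

end Interlacing

lemma ratio_mul_eq_ratio_mul_of_mul_eq {K : Type*} [Field K]
    {F₁ F₂ F₃ F₄ G₁ G₂ G₃ G₄ u₁ u₂ u₃ u₄ d₁ d₂ d₃ d₄ : K}
    (hF₃ : F₃ ≠ 0) (hF₄ : F₄ ≠ 0) (hG₃ : G₃ ≠ 0) (hG₄ : G₄ ≠ 0)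
    (h₁ : G₁ * d₁ = F₁ * u₁) (h₂ : G₂ * d₂ = F₂ * u₂)
    (h₃ : G₃ * d₃ = F₃ * u₃) (h₄ : G₄ * d₄ = F₄ * u₄) :
    G₁ * G₂ / (G₃ * G₄) * (d₁ * d₂ * u₃ * u₄) = F₁ * F₂ / (F₃ * F₄) * (u₁ * u₂ * d₃ * d₄) := by
  field_simp
  linear_combination (G₂ * d₂ * u₃ * u₄ * F₃ * F₄) * h₁ + (F₁ * u₁ * u₃ * u₄ * F₃ * F₄) * h₂ -
    (F₁ * F₂ * u₁ * u₂ * G₄ * d₄) * h₃ - (F₁ * F₂ * u₁ * u₂ * F₃ * u₃) * h₄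

lemma sq_mul_eq_abs_mul_of_mul_eq {K : Type*} [Field K] [LinearOrder K] [IsStrictOrderedRing K]
    {a A r r' P Q : K} (hr : 0 < r) (hr' : 0 < r') (hQ : Q ≠ 0) (hratio : r' * Q = r * P)
    (hkey : a ^ 2 * P = -A * Q) : a ^ 2 * r' = |A| * r := by
  have h : a ^ 2 * r' = -A * r :=
    mul_right_cancel₀ hQ (by linear_combination a ^ 2 * hratio + r * hkey)
  have hA : A ≤ 0 := by nlinarith [sq_nonneg a]
  rw [abs_of_nonpos hA, h]

/-- `N, P, D, E` stand for `gtLin M i j (j + 1)`, `gtLin M i j (j - 1) - 1`, `gtLin M i j j` and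
`gtLin M i j j - 1`; the second factor on each side is then the one in `rGT_addDelta_mul`. -/
lemma sq_mul_eq_neg_mul {K : Type*} [Field K] (N P D E : ℕ → K) {i j : ℕ} (hi : 1 ≤ i)
    (hij : i ≤ j) (hD : ∀ h ∈ (Icc 1 j).erase i, D h ≠ 0)
    (hE : ∀ h ∈ (Icc 1 j).erase i, E h ≠ 0) :
    ((∏ h ∈ Icc 1 i, N h) / (∏ h ∈ Icc 1 (i - 1), D h) * ∏ h ∈ Icc 1 (i - 1), P h / E h) ^ 2 *
        ((∏ b ∈ Icc i (j - 1), -P b) * (∏ b ∈ Icc i j, -N (b + 1)) *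
          (∏ a ∈ Icc 1 (i - 1), D a) * ∏ a ∈ Icc 1 (i - 1), E a) =
      -((∏ h ∈ Icc 1 (j + 1), N h) * (∏ h ∈ Icc 1 (j - 1), P h) /
          ∏ h ∈ (Icc 1 j).erase i, D h * E h) *
        ((∏ a ∈ Icc 1 i, N a) * (∏ a ∈ Icc 1 (i - 1), P a) *
          (∏ b ∈ Icc (i + 1) j, -E b) * ∏ b ∈ Icc i (j - 1), -D (b + 1)) := by
  have hN : ∏ h ∈ Icc 1 (j + 1), N h = (∏ h ∈ Icc 1 i, N h) * ∏ b ∈ Icc i j, N (b + 1) := by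
    rw [prod_Icc_add_one, prod_Icc_mul_prod_Icc N (by omega) (by omega)]
  have hP : ∏ h ∈ Icc 1 (j - 1), P h = (∏ h ∈ Icc 1 (i - 1), P h) * ∏ b ∈ Icc i (j - 1), P b := by
    rw [← prod_Icc_mul_prod_Icc P (b := i - 1) (by omega) (by omega), Nat.sub_add_cancel hi]
  have hDE : ∏ h ∈ (Icc 1 j).erase i, D h * E h = (∏ h ∈ Icc 1 (i - 1), D h) *
      (∏ h ∈ Icc 1 (i - 1), E h) * (∏ b ∈ Icc i (j - 1), D (b + 1)) * ∏ h ∈ Icc (i + 1) j, E h := by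
    rw [prod_erase_Icc _ hi hij, prod_Icc_add_one, Nat.sub_add_cancel (by omega : 1 ≤ j),
      prod_mul_distrib, prod_mul_distrib]
    ring
  have hcard₁ : #(Icc i (j - 1)) = j - i := by simp only [Nat.card_Icc]; omega
  have hcard₂ : #(Icc i j) = j - i + 1 := by simp only [Nat.card_Icc]; omega
  have hcard₃ : #(Icc (i + 1) j) = j - i := by simp only [Nat.card_Icc]; omega
  have hDE₀ : ∏ h ∈ (Icc 1 j).erase i, D h * E h ≠ 0 :=
    prod_ne_zero_iff.mpr fun h hh => mul_ne_zero (hD h hh) (hE h hh)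
  have hlt : ∀ h ∈ Icc 1 (i - 1), h ∈ (Icc 1 j).erase i := fun h hh => by
    simp only [mem_erase, mem_Icc] at hh ⊢
    omega
  have hD₀ : ∏ h ∈ Icc 1 (i - 1), D h ≠ 0 := prod_ne_zero_iff.mpr fun h hh => hD h (hlt h hh)
  have hE₀ : ∏ h ∈ Icc 1 (i - 1), E h ≠ 0 := prod_ne_zero_iff.mpr fun h hh => hE h (hlt h hh)
  rw [hN, hP, prod_div_distrib, prod_neg, prod_neg, prod_neg, prod_neg, hcard₁, hcard₂, hcard₃,
    pow_succ]
  field_simp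
  rw [hDE]
  ring

/-- The array `M + Δ_{i,j}`. -/
def addDelta (M : ℕ → ℕ → ℤ) (i j : ℕ) : ℕ → ℕ → ℤ :=
  fun p q => M p q + if p = i ∧ q = j then 1 else 0

def gtLin (M : ℕ → ℕ → ℤ) (i j q h : ℕ) : ℤ := M h q - M i j - h + i

lemma aGT_eq {M : ℕ → ℕ → ℤ} {i : ℕ} (j : ℕ) (hi : 1 ≤ i) :
    aGT M i j = (∏ h ∈ Icc 1 i, (gtLin M i j (j + 1) h : ℚ)) / (∏ h ∈ Icc 1 (i - 1),
      (gtLin M i j j h : ℚ)) * ∏ h ∈ Icc 1 (i - 1),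
        ((gtLin M i j (j - 1) h - 1 : ℤ) : ℚ) / ((gtLin M i j j h - 1 : ℤ) : ℚ) := by
  rw [aGT, show Icc 2 i = Icc (1 + 1) (i - 1 + 1) by rw [Nat.sub_add_cancel hi],
    ← prod_Icc_add_one]
  congr 1
  refine prod_congr rfl fun h _ => ?_
  simp only [gtLin, Nat.add_sub_cancel]
  push_cast
  ring

section RaiseEntry

variable {n : ℕ} {lam : ℕ → ℤ} {M : ℕ → ℕ → ℤ} {i j : ℕ}

lemma lt_of_isGT_addDelta (hM' : isGT n lam (addDelta M i j)) (hi : 1 ≤ i) (hij : i ≤ j)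
    (hjn : j + 1 ≤ n) : M i j < M i (j + 1) ∧ (2 ≤ i → M i j < M (i - 1) (j - 1)) := by
  refine ⟨?_, fun hi₂ => ?_⟩
  · have h := (hM'.2 i (j + 1) hi (by omega) hjn).1
    simp only [addDelta, Nat.add_sub_cancel, true_and, if_true] at h
    split_ifs at h <;> omega
  · have h := (hM'.2 (i - 1) j (by omega) (by omega) (by omega)).2
    simp only [addDelta, Nat.sub_add_cancel hi, true_and, if_true] at h
    split_ifs at h <;> omega

lemma one_le_gtLin_of_le (hM : isGT n lam M) (hM' : isGT n lam (addDelta M i j)) (hij : i ≤ j)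
    (hjn : j + 1 ≤ n) {h : ℕ} (hh : 1 ≤ h) (hhi : h ≤ i) :
    1 ≤ gtLin M i j (j + 1) h ∧ (h < i → 2 ≤ gtLin M i j (j - 1) h ∧ 2 ≤ gtLin M i j j h) := by
  have hi : 1 ≤ i := hh.trans hhi
  obtain ⟨h₁, h₂⟩ := lt_of_isGT_addDelta hM' hi hij hjn
  rcases hhi.lt_or_eq with hlt | rfl
  · have h₃ := hM.row_le hh (by omega : h ≤ i - 1) (by omega : i - 1 ≤ j - 1) (by omega)
    have h₄ := hM.2 h j hh (by omega) (by omega)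
    have h₅ := hM.2 h (j + 1) hh (by omega) hjn
    have := h₂ (by omega)
    simp only [gtLin, Nat.add_sub_cancel] at h₅ ⊢
    omega
  · simp only [gtLin]
    omega

lemma gtLin_le_neg_one_of_lt (hM : isGT n lam M) (hi : 1 ≤ i) (hjn : j + 1 ≤ n) {h : ℕ}
    (hih : i < h) (hhj : h ≤ j) : gtLin M i j j h ≤ -1 := by
  have := hM.row_le hi hih.le hhj (by omega)
  simp only [gtLin]
  omega

variable (hM : isGT n lam M) (hM' : isGT n lam (addDelta M i j))
  (hi : 1 ≤ i) (hij : i ≤ j) (hjn : j + 1 ≤ n)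
include hM hM' hi hij hjn

lemma prod_numArg₁_addDelta :
    (∏ t ∈ gtTriples n, toNatFactorial (numArg₁ (addDelta M i j) t)) *
        ∏ a ∈ Icc 1 i, (gtLin M i j (j + 1) a : ℚ) =
      (∏ t ∈ gtTriples n, toNatFactorial (numArg₁ M t)) *
        ∏ b ∈ Icc i (j - 1), -((gtLin M i j (j - 1) b - 1 : ℤ) : ℚ) := by
  convert prod_toNatFactorial_mul_prod_line (gtTriples n) (numArg₁ M) (numArg₁ (addDelta M i j))
    (fun t ht => (hM.factorialArgs_nonneg ht).1) (fun t ht => (hM'.factorialArgs_nonneg ht).1)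
    (fun t _ => by simp only [numArg₁, addDelta, abs_le]; split_ifs <;> omega)
    (b := i) (k := j + 1) (I := Icc 1 i) (fun ⟨a, b, k⟩ => by
      simp only [mem_gtTriples, mem_Icc, numArg₁, addDelta]; split_ifs <;> omega)
    (a := i) (k' := j) (J := Icc i (j - 1)) (fun ⟨a, b, k⟩ => by
      simp only [mem_gtTriples, mem_Icc, numArg₁, addDelta]; split_ifs <;> omega) using 2
  · refine prod_congr rfl fun a _ => ?_
    simp only [numArg₁, gtLin, Nat.add_sub_cancel]
  · refine prod_congr rfl fun b hb => ?_
    rw [mem_Icc] at hb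
    simp only [numArg₁, gtLin, addDelta, and_self, if_true]
    rw [if_neg (by omega)]
    push_cast
    ring

lemma prod_numArg₂_addDelta :
    (∏ t ∈ gtTriples n, toNatFactorial (numArg₂ (addDelta M i j) t)) *
        ∏ a ∈ Icc 1 (i - 1), ((gtLin M i j (j - 1) a - 1 : ℤ) : ℚ) =
      (∏ t ∈ gtTriples n, toNatFactorial (numArg₂ M t)) *
        ∏ b ∈ Icc i j, -(gtLin M i j (j + 1) (b + 1) : ℚ) := by
  convert prod_toNatFactorial_mul_prod_line (gtTriples n) (numArg₂ M) (numArg₂ (addDelta M i j))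
    (fun t ht => (hM.factorialArgs_nonneg ht).2.1) (fun t ht => (hM'.factorialArgs_nonneg ht).2.1)
    (fun t _ => by simp only [numArg₂, addDelta, abs_le]; split_ifs <;> omega)
    (b := i - 1) (k := j) (I := Icc 1 (i - 1)) (fun ⟨a, b, k⟩ => by
      simp only [mem_gtTriples, mem_Icc, numArg₂, addDelta]; split_ifs <;> omega)
    (a := i) (k' := j + 1) (J := Icc i j) (fun ⟨a, b, k⟩ => by
      simp only [mem_gtTriples, mem_Icc, numArg₂, addDelta]; split_ifs <;> omega) using 2
  · refine prod_congr rfl fun a _ => ?_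
    simp only [numArg₂, gtLin, Nat.sub_add_cancel hi]
    push_cast [Nat.cast_sub hi]
    ring
  · refine prod_congr rfl fun b hb => ?_
    rw [mem_Icc] at hb
    simp only [numArg₂, gtLin, addDelta, Nat.add_sub_cancel, and_self, if_true]
    rw [if_neg (by omega)]
    push_cast
    ring

lemma prod_denArg₁_addDelta :
    (∏ t ∈ gtTriples n, toNatFactorial (denArg₁ (addDelta M i j) t)) *
        ∏ a ∈ Icc 1 (i - 1), (gtLin M i j j a : ℚ) =
      (∏ t ∈ gtTriples n, toNatFactorial (denArg₁ M t)) *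
        ∏ b ∈ Icc (i + 1) j, -((gtLin M i j j b - 1 : ℤ) : ℚ) := by
  convert prod_toNatFactorial_mul_prod_line (gtTriples n) (denArg₁ M) (denArg₁ (addDelta M i j))
    (fun t ht => (hM.factorialArgs_nonneg ht).2.2.1)
    (fun t ht => (hM'.factorialArgs_nonneg ht).2.2.1)
    (fun t _ => by simp only [denArg₁, addDelta, abs_le]; split_ifs <;> omega)
    (b := i) (k := j + 1) (I := Icc 1 (i - 1)) (fun ⟨a, b, k⟩ => by
      simp only [mem_gtTriples, mem_Icc, denArg₁, addDelta]; split_ifs <;> omega)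
    (a := i) (k' := j + 1) (J := Icc (i + 1) j) (fun ⟨a, b, k⟩ => by
      simp only [mem_gtTriples, mem_Icc, denArg₁, addDelta]; split_ifs <;> omega) using 2
  · refine prod_congr rfl fun a _ => ?_
    simp only [denArg₁, gtLin, Nat.add_sub_cancel]
  · refine prod_congr rfl fun b hb => ?_
    rw [mem_Icc] at hb
    simp only [denArg₁, gtLin, addDelta, Nat.add_sub_cancel, and_self, and_true, if_true]
    rw [if_neg (by omega)]
    push_cast
    ring

lemma prod_denArg₂_addDelta :
    (∏ t ∈ gtTriples n, toNatFactorial (denArg₂ (addDelta M i j) t)) *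
        ∏ a ∈ Icc 1 (i - 1), ((gtLin M i j j a - 1 : ℤ) : ℚ) =
      (∏ t ∈ gtTriples n, toNatFactorial (denArg₂ M t)) *
        ∏ b ∈ Icc i (j - 1), -(gtLin M i j j (b + 1) : ℚ) := by
  convert prod_toNatFactorial_mul_prod_line (gtTriples n) (denArg₂ M) (denArg₂ (addDelta M i j))
    (fun t ht => (hM.factorialArgs_nonneg ht).2.2.2)
    (fun t ht => (hM'.factorialArgs_nonneg ht).2.2.2)
    (fun t _ => by simp only [denArg₂, addDelta, abs_le]; split_ifs <;> omega)
    (b := i - 1) (k := j) (I := Icc 1 (i - 1)) (fun ⟨a, b, k⟩ => by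
      simp only [mem_gtTriples, mem_Icc, denArg₂, addDelta]; split_ifs <;> omega)
    (a := i) (k' := j) (J := Icc i (j - 1)) (fun ⟨a, b, k⟩ => by
      simp only [mem_gtTriples, mem_Icc, denArg₂, addDelta]; split_ifs <;> omega) using 2
  · refine prod_congr rfl fun a _ => ?_
    simp only [denArg₂, gtLin, Nat.sub_add_cancel hi]
    push_cast [Nat.cast_sub hi]
    ring
  · refine prod_congr rfl fun b hb => ?_
    rw [mem_Icc] at hb
    simp only [denArg₂, gtLin, addDelta, and_self, and_true, if_true]
    rw [if_neg (by omega)]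
    push_cast
    ring

lemma rGT_addDelta_mul :
    rGT n (addDelta M i j) *
        ((∏ a ∈ Icc 1 i, (gtLin M i j (j + 1) a : ℚ)) *
          (∏ a ∈ Icc 1 (i - 1), ((gtLin M i j (j - 1) a - 1 : ℤ) : ℚ)) *
          (∏ b ∈ Icc (i + 1) j, -((gtLin M i j j b - 1 : ℤ) : ℚ)) *
          ∏ b ∈ Icc i (j - 1), -(gtLin M i j j (b + 1) : ℚ)) =
      rGT n M *
        ((∏ b ∈ Icc i (j - 1), -((gtLin M i j (j - 1) b - 1 : ℤ) : ℚ)) *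
          (∏ b ∈ Icc i j, -(gtLin M i j (j + 1) (b + 1) : ℚ)) *
          (∏ a ∈ Icc 1 (i - 1), (gtLin M i j j a : ℚ)) *
          ∏ a ∈ Icc 1 (i - 1), ((gtLin M i j j a - 1 : ℤ) : ℚ)) := by
  have hF (f : ℕ × ℕ × ℕ → ℤ) : ∏ t ∈ gtTriples n, toNatFactorial (f t) ≠ 0 :=
    (prod_pos fun t _ => toNatFactorial_pos (f t)).ne'
  rw [rGT_eq_prod_toNatFactorial, rGT_eq_prod_toNatFactorial]
  exact ratio_mul_eq_ratio_mul_of_mul_eq (hF _) (hF _) (hF _) (hF _)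
    (prod_numArg₁_addDelta hM hM' hi hij hjn) (prod_numArg₂_addDelta hM hM' hi hij hjn)
    (prod_denArg₁_addDelta hM hM' hi hij hjn) (prod_denArg₂_addDelta hM hM' hi hij hjn)

lemma gtLin_ne_zero {h : ℕ} (hh : 1 ≤ h) (hhj : h ≤ j) (hhi : h ≠ i) :
    gtLin M i j j h ≠ 0 ∧ gtLin M i j j h - 1 ≠ 0 := by
  rcases Nat.lt_or_gt_of_ne hhi with hlt | hgt
  · have := ((one_le_gtLin_of_le hM hM' hij hjn hh hlt.le).2 hlt).2
    omega
  · have := gtLin_le_neg_one_of_lt hM hi hjn hgt hhj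
    omega

lemma prod_gtLin_ne_zero :
    (∏ a ∈ Icc 1 i, (gtLin M i j (j + 1) a : ℚ)) *
        (∏ a ∈ Icc 1 (i - 1), ((gtLin M i j (j - 1) a - 1 : ℤ) : ℚ)) *
        (∏ b ∈ Icc (i + 1) j, -((gtLin M i j j b - 1 : ℤ) : ℚ)) *
        ∏ b ∈ Icc i (j - 1), -(gtLin M i j j (b + 1) : ℚ) ≠ 0 := by
  refine mul_ne_zero (mul_ne_zero (mul_ne_zero ?_ ?_) ?_) ?_ <;>
    refine prod_ne_zero_iff.mpr fun h hh => ?_ <;> rw [mem_Icc] at hh <;> push_cast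
  · have := (one_le_gtLin_of_le hM hM' hij hjn hh.1 hh.2).1
    exact_mod_cast (by omega : gtLin M i j (j + 1) h ≠ 0)
  · have := ((one_le_gtLin_of_le hM hM' hij hjn hh.1 (by omega)).2 (by omega)).1
    exact_mod_cast (by omega : gtLin M i j (j - 1) h - 1 ≠ 0)
  · have := gtLin_le_neg_one_of_lt hM hi hjn (by omega : i < h) hh.2
    exact_mod_cast (by omega : -(gtLin M i j j h - 1) ≠ 0)
  · have := gtLin_le_neg_one_of_lt hM hi hjn (by omega : i < h + 1) (by omega)
    exact_mod_cast (by omega : -gtLin M i j j (h + 1) ≠ 0)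

end RaiseEntry

theorem aGT_sq_rGT_eq_general (n : ℕ) (lam : ℕ → ℤ)
    (i j : ℕ) (hi : 1 ≤ i) (hij : i ≤ j) (hj : j ≤ n - 1)
    (M : ℕ → ℕ → ℤ) (hM : isGT n lam M)
    (hM' : isGT n lam (fun p q => M p q + if p = i ∧ q = j then 1 else 0)) :
    (∀ h, 1 ≤ h → h ≤ j → h ≠ i →
      M h j - M i j - (h : ℤ) + (i : ℤ) ≠ 0 ∧
      M h j - M i j - (h : ℤ) + (i : ℤ) - 1 ≠ 0) ∧
    aGT M i j ^ 2 * rGT n (fun p q => M p q + if p = i ∧ q = j then 1 else 0) =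
      |AGT M i j| * rGT n M := by
  have hjn : j + 1 ≤ n := by omega
  have hne := fun h => gtLin_ne_zero (h := h) hM hM' hi hij hjn
  have hne' (h : ℕ) (hh : h ∈ (Icc 1 j).erase i) :
      gtLin M i j j h ≠ 0 ∧ gtLin M i j j h - 1 ≠ 0 := by
    rw [mem_erase, mem_Icc] at hh
    exact hne h hh.2.1 hh.2.2 hh.1
  refine ⟨hne, ?_⟩
  rw [aGT_eq j hi]
  exact sq_mul_eq_abs_mul_of_mul_eq (rGT_pos n M) (rGT_pos n _)
    (prod_gtLin_ne_zero hM hM' hi hij hjn) (rGT_addDelta_mul hM hM' hi hij hjn)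
    (sq_mul_eq_neg_mul _ _ _ _ hi hij (fun h hh => Int.cast_ne_zero.mpr (hne' h hh).1)
      (fun h hh => Int.cast_ne_zero.mpr (hne' h hh).2))

/-- If both `M` and `M + Δ_{i,j}` lie in `G(λ)` then all the denominators occurring in
`a_{i,j}(M)` and `A_{i,j}(M)` are nonzero, and
`a_{i,j}(M)² ⬝ r(M + Δ_{i,j}) = |A_{i,j}(M)| ⬝ r(M)`. -/
theorem aGT_sq_rGT_eq (n : ℕ) (hn : 2 ≤ n) (lam : ℕ → ℤ)
    (hlam : ∀ p, 1 ≤ p → p < n → lam (p + 1) ≤ lam p)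
    (i j : ℕ) (hi : 1 ≤ i) (hij : i ≤ j) (hj : j ≤ n - 1)
    (M : ℕ → ℕ → ℤ) (hM : isGT n lam M)
    (hM' : isGT n lam (fun p q => M p q + if p = i ∧ q = j then 1 else 0)) :
    (∀ h, 1 ≤ h → h ≤ j → h ≠ i →
      M h j - M i j - (h : ℤ) + (i : ℤ) ≠ 0 ∧
      M h j - M i j - (h : ℤ) + (i : ℤ) - 1 ≠ 0) ∧
    aGT M i j ^ 2 * rGT n (fun p q => M p q + if p = i ∧ q = j then 1 else 0) =
      |AGT M i j| * rGT n M :=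
  aGT_sq_rGT_eq_general n lam i j hi hij hj M hM hM'
end

section
/- For all integers n ≥ 2 and 1 ≤ l ≤ n−1, setting h = min(l, n−l), the identity n · C(n, l) = C(n, l+1) + C(n, l−1) + (n+2) · n! / ((h+1) · (n+1−h) · (n−1−h)! · (h−1)!) holds, where C(n, k) denotes the binomial coefficient. -/
/-!
Write `n = a + b + 2` and `l = a + 1`. Each of `C(n, l - 1)`, `C(n, l)` and `C(n, l + 1)` is
`n! / (a! b!)` times a rational function of `a` and `b`, so the identity is one between rational
functions. Its last term is symmetric in `a` and `b`, i.e. under `l ↦ n - l`, so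
`h = min(l, n - l)` may be replaced by either `l` or `n - l`.
-/

open Nat

theorem cast_mul_choose_eq_choose_add_choose_add {K : Type*} [Field K] [LinearOrder K]
    [IsStrictOrderedRing K] (a b : ℕ) :
    ((a + b + 2 : ℕ) : K) * (a + b + 2).choose (a + 1) =
      (a + b + 2).choose (a + 2) + (a + b + 2).choose a +
        (((a + b + 2 : ℕ) : K) + 2) * (a + b + 2)! / ((a + 2) * (b + 2) * b ! * a !) := by
  have choose_succ : ((a + b + 2).choose (a + 1) : K) = (a + b + 2)! / ((a + 1)! * (b + 1)!) := by
    rw [show a + b + 2 = (a + 1) + (b + 1) by omega, cast_add_choose]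
  have choose_succ_succ : ((a + b + 2).choose (a + 2) : K) = (a + b + 2)! / ((a + 2)! * b !) := by
    rw [show a + b + 2 = (a + 2) + b by omega, cast_add_choose]
  have choose_self : ((a + b + 2).choose a : K) = (a + b + 2)! / (a ! * (b + 2)!) := by
    rw [show a + b + 2 = a + (b + 2) by omega, cast_add_choose]
  rw [choose_succ, choose_succ_succ, choose_self]
  simp only [factorial_succ (a + 1), factorial_succ a, factorial_succ (b + 1), factorial_succ b]
  push_cast
  field_simp
  ring

theorem dim_count_identity_general (n l h : ℕ) (hl1 : 1 ≤ l) (hl2 : l ≤ n - 1)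
    (hh : h = min l (n - l)) :
    (n : ℚ) * (n.choose l : ℚ) =
      (n.choose (l + 1) : ℚ) + (n.choose (l - 1) : ℚ) +
        ((n : ℚ) + 2) * (n.factorial : ℚ) /
          (((h : ℚ) + 1) * ((n + 1 - h : ℕ) : ℚ) *
            ((n - 1 - h).factorial : ℚ) * ((h - 1).factorial : ℚ)) := by
  obtain ⟨a, rfl⟩ : ∃ a, l = a + 1 := ⟨l - 1, by omega⟩
  obtain ⟨b, rfl⟩ : ∃ b, n = a + b + 2 := ⟨n - a - 2, by omega⟩
  have denominator : ((h : ℚ) + 1) * ((a + b + 2 + 1 - h : ℕ) : ℚ) *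
      (a + b + 2 - 1 - h)! * (h - 1)! = (a + 2) * (b + 2) * b ! * a ! := by
    obtain rfl | rfl : h = a + 1 ∨ h = b + 1 := by omega
    · rw [show a + b + 2 + 1 - (a + 1) = b + 2 by omega, show a + b + 2 - 1 - (a + 1) = b by omega]
      push_cast
      ring
    · rw [show a + b + 2 + 1 - (b + 1) = a + 2 by omega, show a + b + 2 - 1 - (b + 1) = a by omega]
      push_cast
      ring
  rw [denominator, cast_mul_choose_eq_choose_add_choose_add]
  simp

/-- The dimension-count identity underlying the decomposition of `⋀^l(ℂ^n) ⊗ ℂ^n` as an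
`SO(n)`-module: for `2 ≤ n`, `1 ≤ l ≤ n−1` and `h = min(l, n−l)`,
`n·C(n,l) = C(n,l+1) + C(n,l−1) + (n+2)·n! / ((h+1)(n+1−h)(n−1−h)!(h−1)!)`. -/
theorem dim_count_identity (n l h : ℕ) (hn : 2 ≤ n) (hl1 : 1 ≤ l) (hl2 : l ≤ n - 1)
    (hh : h = min l (n - l)) :
    (n : ℚ) * (n.choose l : ℚ) =
      (n.choose (l + 1) : ℚ) + (n.choose (l - 1) : ℚ) +
        ((n : ℚ) + 2) * (n.factorial : ℚ) /
          (((h : ℚ) + 1) * ((n + 1 - h : ℕ) : ℚ) *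
            ((n - 1 - h).factorial : ℚ) * ((h - 1).factorial : ℚ)) :=
  dim_count_identity_general n l h hl1 hl2 hh
end
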